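/- arXiv:2511.08529 — 9 statements merged into one kernel-verified Lean document; each statement's English description precedes it below -/
import Mathlib

section
/- For every positive integer k, the number of n-color compositions of k in which no part has color 2 equals the number of EVEN colored compositions of k. -/
/-- The number of EVEN colored compositions of `ℓ`: compositions where each part
in an even position `i` (positions counted from 1) gets a color in `{1, …, pᵢ}`,
i.e. `∑` over compositions of `∏` of the parts in even positions. -/
def evenColoredCount (ℓ : ℕ) : ℕ :=
  ∑ c : Composition ℓ, ∏ i ∈ Finset.range c.blocks.length,
    if (i + 1) % 2 = 0 then c.blocks.getD i 1 else 1

/-- The number of n-color compositions of `ℓ` in which no part has color 2: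
a part `p = 1` has one allowed color, and a part `p ≥ 2` has `p - 1` allowed colors. -/
def noColor2Count (ℓ : ℕ) : ℕ :=
  ∑ c : Composition ℓ, (c.blocks.map (fun p => if p = 1 then 1 else p - 1)).prod

/-
Splitting off the first part, both sequences satisfy
`a (n + 2) = a (n + 1) + ∑_{i + j = n} (i + 1) a j` with `a 0 = a 1 = 1`. Avoiding color 2,
the first part is either `1` or `i + 2` with `i + 1` colors. In an even colored composition the
uncolored first part is either `1`, followed by a part `i + 1` with `i + 1` colors and an even
colored composition of `j`, or larger, and then shrinking it by one gives an even colored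
composition of `n + 1`.
-/

open Finset

namespace Composition

theorem sum_zero {M : Type*} [AddCommMonoid M] (G : List ℕ → M) :
    ∑ c : Composition 0, G c.blocks = G [] := by
  have : Subsingleton (Composition 0) :=
    ⟨fun c d => Composition.ext (by rw [c.blocks_eq_nil.mpr rfl, d.blocks_eq_nil.mpr rfl])⟩
  rw [Fintype.sum_subsingleton _ (ones 0), ones_blocks, List.replicate_zero]

theorem blocks_eq_cons {n : ℕ} (c : Composition (n + 1)) :
    c.blocks = (c.blocks.headI - 1 + 1) :: c.blocks.tail := by
  rcases hc : c.blocks with _ | ⟨p, l⟩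
  · exact absurd (c.blocks_eq_nil.mp hc) n.succ_ne_zero
  · have : 0 < p := c.blocks_pos (by simp [hc])
    rw [List.headI_cons, List.tail_cons, Nat.sub_add_cancel this]

theorem heq_of_blocks_eq {m n : ℕ} {c : Composition m} {d : Composition n}
    (h : c.blocks = d.blocks) : c ≍ d := by
  obtain rfl : m = n := c.blocks_sum.symm.trans (h ▸ d.blocks_sum)
  exact heq_of_eq (Composition.ext h)

theorem sum_succ {M : Type*} [AddCommMonoid M] (n : ℕ) (G : List ℕ → M) :
    ∑ c : Composition (n + 1), G c.blocks =
      ∑ x ∈ antidiagonal n, ∑ c : Composition x.2, G ((x.1 + 1) :: c.blocks) := by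
  rw [sum_sigma']
  refine sum_bij' (fun c _ => ⟨(c.blocks.headI - 1, c.blocks.tail.sum),
      ⟨c.blocks.tail, fun h => c.blocks_pos (List.mem_of_mem_tail h), rfl⟩⟩)
    (fun x hx => ⟨(x.1.1 + 1) :: x.2.blocks, ?_, ?_⟩) (fun c _ => ?_) (fun _ _ => mem_univ _)
    (fun c _ => ?_) (fun x hx => ?_) (fun c _ => congrArg G c.blocks_eq_cons)
  · intro i hi
    obtain rfl | hi := List.mem_cons.mp hi
    · omega
    · exact x.2.blocks_pos hi
  · have := HasAntidiagonal.mem_antidiagonal.mp (mem_sigma.mp hx).1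
    rw [List.sum_cons, x.2.blocks_sum]
    omega
  · have := congrArg List.sum c.blocks_eq_cons
    rw [c.blocks_sum, List.sum_cons] at this
    simp only [mem_sigma, HasAntidiagonal.mem_antidiagonal, mem_univ, and_true]
    omega
  · exact Composition.ext c.blocks_eq_cons.symm
  · exact Sigma.ext (Prod.ext (Nat.add_sub_cancel _ _) x.2.blocks_sum) (heq_of_blocks_eq rfl)

end Composition

namespace List

variable {α M : Type*}

def altMapProd [Monoid M] (f g : α → M) : List α → M
  | [] => 1
  | a :: l => f a * altMapProd g f l

@[simp]
theorem altMapProd_cons [Monoid M] (f g : α → M) (a : α) (l : List α) :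
    altMapProd f g (a :: l) = f a * altMapProd g f l := rfl

theorem altMapProd_self [Monoid M] (f : α → M) (l : List α) :
    altMapProd f f l = (l.map f).prod := by
  induction l with
  | nil => rfl
  | cons a l ih => rw [altMapProd_cons, ih, map_cons, prod_cons]

theorem altMapProd_eq_prod_range [CommMonoid M] (f g : α → M) (l : List α) (d : α) :
    altMapProd f g l =
      ∏ i ∈ Finset.range l.length, if Even i then f (l.getD i d) else g (l.getD i d) := by
  induction l generalizing f g with
  | nil => rfl
  | cons a l ih =>
    rw [altMapProd_cons, ih, length_cons, Finset.prod_range_succ', mul_comm]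
    simp only [Nat.even_add_one, ite_not, getD_cons_succ, getD_cons_zero, Even.zero, if_true]

end List

section

variable {R : Type*} [Semiring R]

def altCount (f g : ℕ → R) (n : ℕ) : R :=
  ∑ c : Composition n, c.blocks.altMapProd f g

theorem altCount_zero (f g : ℕ → R) : altCount f g 0 = 1 :=
  Composition.sum_zero _

theorem altCount_succ (f g : ℕ → R) (n : ℕ) :
    altCount f g (n + 1) = ∑ x ∈ antidiagonal n, f (x.1 + 1) * altCount g f x.2 := by
  simp only [altCount, Composition.sum_succ, List.altMapProd_cons, mul_sum]

theorem altCount_succ_succ (f g : ℕ → R) (n : ℕ) :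
    altCount f g (n + 2) = f 1 * altCount g f (n + 1) +
      ∑ x ∈ antidiagonal n, f (x.1 + 2) * altCount g f x.2 := by
  rw [altCount_succ, Nat.sum_antidiagonal_succ]

theorem altCount_one (f g : ℕ → R) : altCount f g 1 = f 1 := by
  simp [altCount_succ, altCount_zero]

end

theorem eq_of_recurrence {a b : ℕ → ℕ} (h0 : a 0 = b 0) (h1 : a 1 = b 1)
    (ha : ∀ n, a (n + 2) = a (n + 1) + ∑ x ∈ antidiagonal n, (x.1 + 1) * a x.2)
    (hb : ∀ n, b (n + 2) = b (n + 1) + ∑ x ∈ antidiagonal n, (x.1 + 1) * b x.2) : a = b := by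
  funext n
  induction n using Nat.strong_induction_on with
  | _ n ih =>
    match n with
    | 0 => exact h0
    | 1 => exact h1
    | n + 2 =>
      rw [ha, hb, ih (n + 1) (by omega)]
      congr 1
      refine sum_congr rfl fun x hx => ?_
      rw [ih x.2 (by have := HasAntidiagonal.mem_antidiagonal.mp hx; omega)]

def noColor2Weight (p : ℕ) : ℕ := if p = 1 then 1 else p - 1

theorem noColor2Count_eq_altCount : noColor2Count = altCount noColor2Weight noColor2Weight := by
  funext n
  simp only [noColor2Count, altCount, List.altMapProd_self]
  rfl

theorem evenColoredCount_eq_altCount : evenColoredCount = altCount (1 : ℕ → ℕ) id := by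
  funext n
  refine sum_congr rfl fun c _ => ?_
  rw [List.altMapProd_eq_prod_range _ _ _ 1]
  refine prod_congr rfl fun i _ => ?_
  simp only [← Nat.even_iff, Nat.even_add_one, ite_not, Pi.one_apply, id]

theorem noColor2Count_succ_succ (n : ℕ) :
    noColor2Count (n + 2) = noColor2Count (n + 1) +
      ∑ x ∈ antidiagonal n, (x.1 + 1) * noColor2Count x.2 := by
  simp [noColor2Count_eq_altCount, altCount_succ_succ, noColor2Weight]

theorem evenColoredCount_succ_succ (n : ℕ) :
    evenColoredCount (n + 2) = evenColoredCount (n + 1) +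
      ∑ x ∈ antidiagonal n, (x.1 + 1) * evenColoredCount x.2 := by
  rw [evenColoredCount_eq_altCount, altCount_succ_succ, altCount_succ id, altCount_succ 1]
  simp only [Pi.one_apply, one_mul, id, add_comm]

theorem noColor2Count_eq_evenColoredCount_general (k : ℕ) :
    noColor2Count k = evenColoredCount k := by
  have h0 : noColor2Count 0 = evenColoredCount 0 := by
    rw [noColor2Count_eq_altCount, evenColoredCount_eq_altCount, altCount_zero, altCount_zero]
  have h1 : noColor2Count 1 = evenColoredCount 1 := by
    rw [noColor2Count_eq_altCount, evenColoredCount_eq_altCount, altCount_one, altCount_one]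
    rfl
  exact congrFun (eq_of_recurrence h0 h1 noColor2Count_succ_succ evenColoredCount_succ_succ) k

theorem noColor2Count_eq_evenColoredCount (k : ℕ) (hk : 0 < k) :
    noColor2Count k = evenColoredCount k :=
  noColor2Count_eq_evenColoredCount_general k
end

section
/- For every positive integer k, the number of ODD colored compositions of k equals the number of binomial(n,2)-color compositions of k+1. -/
/-- The number of ODD colored compositions of `ℓ`: compositions where each part
in an odd position `i` (positions counted from 1) gets a color in `{1, …, pᵢ}`,
i.e. `∑` over compositions of `∏` of the parts in odd positions. -/
def oddColoredCount (ℓ : ℕ) : ℕ :=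
  ∑ c : Composition ℓ, ∏ i ∈ Finset.range c.blocks.length,
    if (i + 1) % 2 = 1 then c.blocks.getD i 1 else 1

/-- The number of `binomial(n,2)`-color compositions of `ℓ`: compositions where each
part `p` gets a 2-element subset of `{1, …, p}` as its color, so `C(p, 2)` choices. -/
def chooseTwoColoredCount (ℓ : ℕ) : ℕ :=
  ∑ c : Composition ℓ, (c.blocks.map (fun p => Nat.choose p 2)).prod

/-!
Let `A`, `B` and `T` be the generating functions of compositions weighted by the product of the
parts in odd positions, in even positions, and by `∏ C(pᵢ, 2)` respectively. Splitting off the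
first part gives `A = 1 + x B / (1 - x)²`, `B = 1 + x A / (1 - x)` and `T = 1 + x² T / (1 - x)³`.
Eliminating `B`, both `T` and `1 + x (A - 1)` solve `((1 - x)³ - x²) S = (1 - x)³`, and
`(1 - x)³ - x²` is invertible, so they agree; comparing coefficients of `x^(k+1)` gives the claim.
-/

open PowerSeries

namespace Composition

def consEquiv (n : ℕ) : (Σ p : Fin (n + 1), Composition (n - p)) ≃ Composition (n + 1) where
  toFun x := ⟨(x.1 + 1) :: x.2.blocks,
    fun hi => (List.mem_cons.1 hi).elim (· ▸ Nat.succ_pos _) x.2.blocks_pos,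
    by have := x.1.isLt; simp [x.2.blocks_sum]; omega⟩
  invFun
    | ⟨[], _, h⟩ => absurd h (by simp)
    | ⟨a :: l, hpos, h⟩ => ⟨⟨a - 1, by simp at h; omega⟩,
        ⟨l, fun hi => hpos (.tail _ hi), show l.sum = n - (a - 1) by
          have := hpos List.mem_cons_self; rw [List.sum_cons] at h; omega⟩⟩
  left_inv _ := rfl
  right_inv
    | ⟨[], _, h⟩ => absurd h (by simp)
    | ⟨a :: l, hpos, _⟩ => Composition.ext <| by
        have := hpos List.mem_cons_self
        simp only [List.cons.injEq, and_true]
        omega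

theorem sum_univ_succ {M : Type*} [AddCommMonoid M] (n : ℕ) (f : List ℕ → M) :
    ∑ c : Composition (n + 1), f c.blocks =
      ∑ p ∈ Finset.range (n + 1), ∑ c : Composition (n - p), f ((p + 1) :: c.blocks) := by
  rw [← (consEquiv n).sum_comp, Fintype.sum_sigma]
  exact Fin.sum_univ_eq_sum_range (fun p => ∑ c : Composition (n - p), f ((p + 1) :: c.blocks)) _

instance : Unique (Composition 0) where
  default := ⟨[], by simp, rfl⟩
  uniq
    | ⟨[], _, _⟩ => rfl
    | ⟨a :: l, hpos, h⟩ => absurd h (by have := hpos List.mem_cons_self; simp; omega)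

end Composition

def compositionSeries {R : Type*} [CommSemiring R] (f : List ℕ → R) : R⟦X⟧ :=
  mk fun n => ∑ c : Composition n, f c.blocks

theorem compositionSeries_eq_one_add_X_mul {R : Type*} [CommSemiring R] {f g : List ℕ → R}
    (W : R⟦X⟧) (hf₀ : f [] = 1) (hf : ∀ p l, f ((p + 1) :: l) = coeff p W * g l) :
    compositionSeries f = 1 + X * W * compositionSeries g := by
  ext (_ | n)
  · simp [compositionSeries]
    exact hf₀
  · rw [mul_assoc, map_add, coeff_succ_X_mul, coeff_mul,
      Finset.Nat.sum_antidiagonal_eq_sum_range_succ (fun i j => coeff i _ * coeff j _)]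
    simp [compositionSeries, Composition.sum_univ_succ, hf, Finset.mul_sum]

theorem eq_one_add_X_mul_sub_one {R : Type*} [CommRing R] {G A B T : R⟦X⟧}
    (hG : G * (1 - X) = 1) (hA : A = 1 + X * G ^ 2 * B) (hB : B = 1 + X * G * A)
    (hT : T = 1 + X * (X * G ^ 3) * T) : T = 1 + X * (A - 1) := by
  have hA' : (1 - X) ^ 2 * (A - 1) = X * B := by
    linear_combination (1 - X) ^ 2 * hA + X * B * (G * (1 - X) + 1) * hG
  have hB' : (1 - X) * (B - 1) = X * A := by
    linear_combination (1 - X) * hB + X * A * hG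
  have hT' : (1 - X) ^ 3 * (T - 1) = X ^ 2 * T := by
    linear_combination (1 - X) ^ 3 * hT + X ^ 2 * T * ((G * (1 - X)) ^ 2 + G * (1 - X) + 1) * hG
  have hS : (1 - X) ^ 3 * (1 + X * (A - 1) - 1) = X ^ 2 * (1 + X * (A - 1)) := by
    linear_combination X * (1 - X) * hA' + X ^ 2 * hB'
  have hD : IsUnit ((1 - X) ^ 3 - X ^ 2 : R⟦X⟧) := isUnit_iff_constantCoeff.2 (by simp)
  exact hD.mul_left_cancel (by linear_combination hT' - hS)

def oddPositionProd : List ℕ → ℕ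
  | [] => 1
  | [p] => p
  | p :: _ :: l => p * oddPositionProd l

theorem oddPositionProd_cons (p : ℕ) (l : List ℕ) :
    oddPositionProd (p :: l) = p * oddPositionProd l.tail := by
  rcases l with _ | ⟨q, l⟩ <;> simp [oddPositionProd]

theorem prod_range_ite_getD_eq_oddPositionProd (l : List ℕ) :
    ∏ i ∈ Finset.range l.length, (if (i + 1) % 2 = 1 then l.getD i 1 else 1) =
      oddPositionProd l := by
  induction l using oddPositionProd.induct with
  | case1 => rfl
  | case2 p => simp [oddPositionProd]
  | case3 p q l ih =>
    rw [List.length_cons, List.length_cons, Finset.prod_range_succ', Finset.prod_range_succ']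
    have parity (i : ℕ) : (i + 1 + 1 + 1) % 2 = (i + 1) % 2 := by omega
    simp [oddPositionProd, ← ih, parity, mul_comm]

section Series

variable {R : Type*} [CommRing R]

theorem compositionSeries_oddPositionProd :
    compositionSeries (fun l => (oddPositionProd l : R)) =
      1 + X * mk 1 ^ 2 * compositionSeries (fun l => (oddPositionProd l.tail : R)) := by
  refine compositionSeries_eq_one_add_X_mul _ (by simp [oddPositionProd]) fun p l => ?_
  simp [oddPositionProd_cons, mk_one_pow_eq_mk_choose_add, add_comm]

theorem compositionSeries_oddPositionProd_tail :
    compositionSeries (fun l => (oddPositionProd l.tail : R)) =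
      1 + X * mk 1 * compositionSeries (fun l => (oddPositionProd l : R)) :=
  compositionSeries_eq_one_add_X_mul _ (by simp [oddPositionProd]) fun _ _ => by simp

theorem compositionSeries_prod_choose_two :
    compositionSeries (fun l => (((l.map (·.choose 2)).prod : ℕ) : R)) =
      1 + X * (X * mk 1 ^ 3) *
        compositionSeries (fun l => (((l.map (·.choose 2)).prod : ℕ) : R)) := by
  refine compositionSeries_eq_one_add_X_mul _ (by simp) fun p l => ?_
  rcases p with _ | p
  · simp
  · simp [coeff_succ_X_mul, mk_one_pow_eq_mk_choose_add, add_comm, add_left_comm]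

end Series

theorem oddColoredCount_eq_chooseTwoColoredCount (k : ℕ) (hk : 0 < k) :
    oddColoredCount k = chooseTwoColoredCount (k + 1) := by
  obtain ⟨n, rfl⟩ := Nat.exists_eq_add_one_of_ne_zero hk.ne'
  have key := congrArg (coeff (n + 2)) <| eq_one_add_X_mul_sub_one (mk_one_mul_one_sub_eq_one ℤ)
    compositionSeries_oddPositionProd compositionSeries_oddPositionProd_tail
    compositionSeries_prod_choose_two
  simp only [compositionSeries, coeff_mk, map_add, coeff_succ_X_mul, map_sub, coeff_one] at key
  rw [if_neg (by omega), if_neg (by omega), zero_add, sub_zero] at key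
  simp only [oddColoredCount, chooseTwoColoredCount, prod_range_ite_getD_eq_oddPositionProd]
  exact_mod_cast key.symm
end

section
/- For every integer k ≥ 2, the number of ODD colored compositions of k equals the number of ternary strings of length k−1 over the alphabet {0,1,2} containing no occurrence of the consecutive substring 01 and no occurrence of the consecutive substring 12. -/
namespace OCCAux

/-! ### Weights of compositions -/

def prodOdd (l : List ℕ) : ℕ :=
  ∏ i ∈ Finset.range l.length, if (i + 1) % 2 = 1 then l.getD i 1 else 1

def prodEven (l : List ℕ) : ℕ :=
  ∏ i ∈ Finset.range l.length, if (i + 1) % 2 = 0 then l.getD i 1 else 1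

lemma prodOdd_nil : prodOdd [] = 1 := rfl
lemma prodEven_nil : prodEven [] = 1 := rfl

lemma prodOdd_cons (a : ℕ) (l : List ℕ) : prodOdd (a :: l) = a * prodEven l := by
  unfold prodOdd prodEven
  rw [List.length_cons, Finset.prod_range_succ']
  simp only [List.getD_cons_succ, List.getD_cons_zero]
  rw [Nat.mul_comm]
  congr 1
  refine Finset.prod_congr rfl fun i _ => ?_
  have h : (i + 1 + 1) % 2 = 1 ↔ (i + 1) % 2 = 0 := by omega
  simp [h]

lemma prodEven_cons (a : ℕ) (l : List ℕ) : prodEven (a :: l) = prodOdd l := by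
  unfold prodOdd prodEven
  rw [List.length_cons, Finset.prod_range_succ']
  simp only [List.getD_cons_succ, List.getD_cons_zero]
  have h0 : ¬ ((0 + 1) % 2 = 0) := by omega
  rw [if_neg h0, Nat.mul_one]
  refine Finset.prod_congr rfl fun i _ => ?_
  have h : (i + 1 + 1) % 2 = 0 ↔ (i + 1) % 2 = 1 := by omega
  simp [h]

/-! ### Compositions as a `Finset` of lists -/

def comps : ℕ → Finset (List ℕ)
  | 0 => {[]}
  | (n+1) => (Finset.range (n+1)).attach.biUnion
      (fun j => (comps j.1).image (fun l => (n + 1 - j.1) :: l))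
  decreasing_by exact Finset.mem_range.mp j.2

lemma sum_comps_succ (n : ℕ) (g : List ℕ → ℕ) :
    ∑ l ∈ comps (n+1), g l
      = ∑ j ∈ Finset.range (n+1), ∑ l ∈ comps j, g ((n + 1 - j) :: l) := by
  rw [comps]
  rw [Finset.sum_biUnion]
  · rw [← Finset.sum_attach (Finset.range (n+1))
      (fun j => ∑ l ∈ comps j, g ((n + 1 - j) :: l))]
    refine Finset.sum_congr rfl fun j _ => ?_
    exact Finset.sum_image (fun x _ y _ h => (List.cons.injEq _ _ _ _).mp h |>.2)
  · intro j _ j' _ hne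
    refine Finset.disjoint_left.mpr fun l hl hl' => ?_
    obtain ⟨x, _, hx⟩ := Finset.mem_image.mp hl
    obtain ⟨y, _, hy⟩ := Finset.mem_image.mp hl'
    rw [← hy] at hx
    have hj := Finset.mem_range.mp j.2
    have hj' := Finset.mem_range.mp j'.2
    have := (List.cons.injEq _ _ _ _).mp hx |>.1
    exact hne (Subtype.ext (by omega))

lemma mem_comps {n : ℕ} {l : List ℕ} :
    l ∈ comps n ↔ l.sum = n ∧ ∀ x ∈ l, 0 < x := by
  induction n using Nat.strong_induction_on generalizing l with
  | _ n ih =>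
    match n with
    | 0 =>
      simp only [comps, Finset.mem_singleton]
      constructor
      · rintro rfl; simp
      · rintro ⟨hs, hp⟩
        cases l with
        | nil => rfl
        | cons a l => exact absurd hs (by have := hp a (by simp); simp; omega)
    | (n+1) =>
      rw [comps]
      simp only [Finset.mem_biUnion, Finset.mem_attach, true_and, Finset.mem_image,
        Subtype.exists, Finset.mem_range]
      constructor
      · rintro ⟨j, hj, x, hx, rfl⟩
        obtain ⟨hsum, hpos⟩ := (ih j hj).mp hx
        refine ⟨by simp [hsum]; omega, ?_⟩
        intro y hy
        rcases List.mem_cons.mp hy with rfl | hy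
        · omega
        · exact hpos y hy
      · rintro ⟨hs, hp⟩
        cases l with
        | nil => simp at hs
        | cons a x =>
          have ha : 0 < a := hp a (by simp)
          have hsx : x.sum = n + 1 - a := by simp at hs; omega
          have hale : a ≤ n + 1 := by simp at hs; omega
          refine ⟨n + 1 - a, by omega, x, ?_, ?_⟩
          · exact (ih _ (by omega)).mpr ⟨hsx, fun y hy => hp y (List.mem_cons_of_mem _ hy)⟩
          · congr 1; omega

/-! ### The sequences `o`, `e`, `E` -/

def o (n : ℕ) : ℕ := ∑ l ∈ comps n, prodOdd l
def e (n : ℕ) : ℕ := ∑ l ∈ comps n, prodEven l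
def E (n : ℕ) : ℕ := ∑ j ∈ Finset.range (n+1), e j

lemma o_zero : o 0 = 1 := by simp [o, comps, prodOdd_nil]
lemma e_zero : e 0 = 1 := by simp [e, comps, prodEven_nil]

lemma o_succ (n : ℕ) : o (n+1) = ∑ j ∈ Finset.range (n+1), (n + 1 - j) * e j := by
  rw [o, sum_comps_succ]
  refine Finset.sum_congr rfl fun j _ => ?_
  rw [e, Finset.mul_sum]
  exact Finset.sum_congr rfl fun l _ => prodOdd_cons _ _

lemma e_succ (n : ℕ) : e (n+1) = ∑ j ∈ Finset.range (n+1), o j := by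
  rw [e, sum_comps_succ]
  refine Finset.sum_congr rfl fun j _ => ?_
  rw [o]
  exact Finset.sum_congr rfl fun l _ => prodEven_cons _ _

lemma e_rec (n : ℕ) : e (n+2) = e (n+1) + o (n+1) := by
  rw [e_succ, e_succ, Finset.sum_range_succ]

lemma o_rec (n : ℕ) : o (n+2) = o (n+1) + E (n+1) := by
  rw [o_succ, o_succ, E]
  have key : ∀ j ∈ Finset.range (n+2), (n + 2 - j) * e j = (n + 1 - j) * e j + e j := by
    intro j hj
    have := Finset.mem_range.mp hj
    rcases Nat.lt_or_ge j (n+1) with h | h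
    · rw [show n + 2 - j = (n + 1 - j) + 1 by omega, Nat.add_mul, Nat.one_mul]
    · have hj' : j = n + 1 := by omega
      subst hj'; simp
  rw [Finset.sum_congr rfl key, Finset.sum_add_distrib]
  congr 1
  rw [Finset.sum_range_succ, Nat.sub_self, Nat.zero_mul, Nat.add_zero]

lemma E_zero : E 0 = 1 := by simp [E, e_zero]
lemma E_rec (n : ℕ) : E (n+1) = E n + e (n+1) := Finset.sum_range_succ _ _

/-! ### Ternary strings -/

def Good (a b : Fin 3) : Prop := ¬(a = 0 ∧ b = 1) ∧ ¬(a = 1 ∧ b = 2)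

instance (a b : Fin 3) : Decidable (Good a b) := by unfold Good; infer_instance

def V (n : ℕ) (f : Fin n → Fin 3) : Prop :=
  ∀ (i : ℕ) (h : i + 1 < n),
    Good (f ⟨i, Nat.lt_of_succ_lt h⟩) (f ⟨i + 1, h⟩)

noncomputable def N (n : ℕ) : ℕ := Nat.card {f : Fin n → Fin 3 // V n f}

noncomputable def M (n : ℕ) (a : Fin 3) : ℕ :=
  Nat.card {f : Fin (n+1) → Fin 3 // V (n+1) f ∧ f 0 = a}

lemma card_sigma_fin3 (β : Fin 3 → Type) [∀ a, Finite (β a)] :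
    Nat.card (Σ a, β a) = Nat.card (β 0) + Nat.card (β 1) + Nat.card (β 2) := by
  have e : (Σ a, β a) ≃ (β 0 ⊕ (β 1 ⊕ β 2)) :=
    { toFun := fun x => match x with
        | ⟨0, y⟩ => .inl y
        | ⟨1, y⟩ => .inr (.inl y)
        | ⟨2, y⟩ => .inr (.inr y)
      invFun := fun x => match x with
        | .inl y => ⟨0, y⟩
        | .inr (.inl y) => ⟨1, y⟩
        | .inr (.inr y) => ⟨2, y⟩
      left_inv := fun x => by
        match x with
        | ⟨0, y⟩ => rfl
        | ⟨1, y⟩ => rfl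
        | ⟨2, y⟩ => rfl
      right_inv := fun x => by
        match x with
        | .inl y => rfl
        | .inr (.inl y) => rfl
        | .inr (.inr y) => rfl }
  rw [Nat.card_congr e, Nat.card_sum, Nat.card_sum, Nat.add_assoc]

lemma M_zero (a : Fin 3) : M 0 a = 1 := by
  rw [M, Nat.card_eq_one_iff_unique]
  constructor
  · refine ⟨fun f g => ?_⟩
    ext i
    have : i = 0 := by omega
    rw [this, f.2.2, g.2.2]
  · exact ⟨⟨fun _ => a, fun i h => absurd h (by omega), rfl⟩⟩

lemma N_succ (n : ℕ) : N (n+1) = M n 0 + M n 1 + M n 2 := by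
  rw [N]
  have e : {f : Fin (n+1) → Fin 3 // V (n+1) f} ≃
      Σ a : Fin 3, {f : Fin (n+1) → Fin 3 // V (n+1) f ∧ f 0 = a} :=
    { toFun := fun f => ⟨f.1 0, f.1, f.2, rfl⟩
      invFun := fun x => ⟨x.2.1, x.2.2.1⟩
      left_inv := fun f => rfl
      right_inv := fun x => by
        obtain ⟨a, f, hf, h0⟩ := x
        subst h0
        rfl }
  rw [Nat.card_congr e, card_sigma_fin3]
  rfl

lemma V_tail {n : ℕ} {f : Fin (n+2) → Fin 3} (hf : V (n+2) f) : V (n+1) (Fin.tail f) := by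
  intro i h
  have := hf (i+1) (Nat.succ_lt_succ h)
  simpa [Fin.tail] using this

lemma good_head {n : ℕ} {f : Fin (n+2) → Fin 3} (hf : V (n+2) f) :
    Good (f 0) (Fin.tail f 0) := by
  have := hf 0 (by omega)
  rw [Fin.mk_zero, Fin.mk_one] at this
  simpa [Fin.tail, Fin.succ_zero_eq_one] using this

lemma V_cons {n : ℕ} (a : Fin 3) (g : Fin (n+1) → Fin 3) (hg : V (n+1) g)
    (hab : Good a (g 0)) : V (n+2) (Fin.cons a g) := by
  intro i h
  match i, h with
  | 0, h =>
    rw [Fin.mk_zero, Fin.mk_one, Fin.cons_zero]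
    rw [show (1 : Fin (n+2)) = Fin.succ 0 from (Fin.succ_zero_eq_one).symm, Fin.cons_succ]
    exact hab
  | (i+1), h =>
    have hh : i + 1 < n + 1 := by omega
    have hs : (⟨i+1, Nat.lt_of_succ_lt h⟩ : Fin (n+2)) = Fin.succ ⟨i, by omega⟩ := rfl
    have hs2 : (⟨i+1+1, h⟩ : Fin (n+2)) = Fin.succ ⟨i+1, hh⟩ := rfl
    rw [hs, hs2, Fin.cons_succ, Fin.cons_succ]
    exact hg i hh

def stepEquiv (n : ℕ) (a : Fin 3) :
    {f : Fin (n+2) → Fin 3 // V (n+2) f ∧ f 0 = a} ≃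
      Σ b : Fin 3, {g : Fin (n+1) → Fin 3 // (V (n+1) g ∧ g 0 = b) ∧ Good a b} where
  toFun f := ⟨Fin.tail f.1 0, Fin.tail f.1,
    ⟨⟨V_tail f.2.1, rfl⟩, by have := good_head f.2.1; rwa [f.2.2] at this⟩⟩
  invFun x := ⟨Fin.cons a x.2.1,
    V_cons a x.2.1 x.2.2.1.1 (by have := x.2.2.2; rwa [← x.2.2.1.2] at this), by simp⟩
  left_inv f := by
    apply Subtype.ext
    have h := Fin.cons_self_tail (f.1 : Fin (n+2) → Fin 3)
    rw [f.2.2] at h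
    exact h
  right_inv x := by
    obtain ⟨b, g, ⟨⟨hg, hg0⟩, hab⟩⟩ := x
    apply Sigma.subtype_ext
    · simp [Fin.tail_cons, hg0]
    · simp [Fin.tail_cons]

lemma card_fiber (n : ℕ) (a b : Fin 3) :
    Nat.card {g : Fin (n+1) → Fin 3 // (V (n+1) g ∧ g 0 = b) ∧ Good a b}
      = if Good a b then M n b else 0 := by
  by_cases h : Good a b
  · rw [if_pos h, M]
    exact Nat.card_congr (Equiv.subtypeEquivRight fun g => and_iff_left h)
  · rw [if_neg h]
    have : IsEmpty {g : Fin (n+1) → Fin 3 // (V (n+1) g ∧ g 0 = b) ∧ Good a b} :=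
      ⟨fun g => h g.2.2⟩
    exact Nat.card_of_isEmpty

lemma M_succ (n : ℕ) (a : Fin 3) :
    M (n+1) a = (if Good a 0 then M n 0 else 0) + (if Good a 1 then M n 1 else 0)
      + (if Good a 2 then M n 2 else 0) := by
  rw [M, Nat.card_congr (stepEquiv n a), card_sigma_fin3, card_fiber, card_fiber, card_fiber]

lemma M_succ_zero (n : ℕ) : M (n+1) 0 = M n 0 + M n 2 := by
  rw [M_succ, if_pos (by decide), if_neg (by decide), if_pos (by decide)]; omega

lemma M_succ_one (n : ℕ) : M (n+1) 1 = M n 0 + M n 1 := by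
  rw [M_succ, if_pos (by decide), if_pos (by decide), if_neg (by decide)]; omega

lemma M_succ_two (n : ℕ) : M (n+1) 2 = M n 0 + M n 1 + M n 2 := by
  rw [M_succ, if_pos (by decide), if_pos (by decide), if_pos (by decide)]

/-! ### The key induction -/

lemma key (n : ℕ) :
    o (n+1) = M n 2 ∧ e (n+1) = M n 0 ∧ E (n+1) = M n 0 + M n 1 := by
  induction n with
  | zero =>
    refine ⟨?_, ?_, ?_⟩
    · rw [o_succ]; simp [e_zero, M_zero]
    · rw [e_succ]; simp [o_zero, M_zero]
    · rw [E_rec, E_zero, M_zero, M_zero]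
      have h1 : e (0+1) = 1 := by rw [e_succ]; simp [o_zero]
      omega
  | succ n ih =>
    obtain ⟨ho, he, hE⟩ := ih
    refine ⟨?_, ?_, ?_⟩
    · rw [o_rec, M_succ_two, ho, hE]; omega
    · rw [e_rec, M_succ_zero, ho, he]
    · rw [E_rec, e_rec, M_succ_zero, M_succ_one, ho, he, hE]; omega

end OCCAux

namespace OCCAux

lemma oddColoredCount_eq_o (k : ℕ) : oddColoredCount k = o k := by
  rw [oddColoredCount, o]
  refine Finset.sum_bij' (fun c _ => c.blocks)
    (fun l hl => ⟨l, fun {i} hi => (mem_comps.mp hl).2 i hi, (mem_comps.mp hl).1⟩)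
    (fun c _ => mem_comps.mpr ⟨c.blocks_sum, fun x hx => c.blocks_pos hx⟩)
    (fun l hl => Finset.mem_univ _)
    (fun c _ => by ext1; rfl)
    (fun l _ => rfl)
    (fun c _ => rfl)

end OCCAux

/-- The number of ODD colored compositions of `k` equals the number of ternary
strings of length `k - 1` avoiding the consecutive substrings `01` and `12`. -/
theorem oddColoredCount_eq_ternary_avoiding (k : ℕ) (hk : 2 ≤ k) :
    oddColoredCount k =
      Nat.card {f : Fin (k - 1) → Fin 3 //
        ∀ (i : ℕ) (h : i + 1 < k - 1),
          ¬(f ⟨i, Nat.lt_of_succ_lt h⟩ = 0 ∧ f ⟨i + 1, h⟩ = 1) ∧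
          ¬(f ⟨i, Nat.lt_of_succ_lt h⟩ = 1 ∧ f ⟨i + 1, h⟩ = 2)} := by
  obtain ⟨n, rfl⟩ : ∃ n, k = n + 2 := ⟨k - 2, by omega⟩
  have hRHS : Nat.card {f : Fin (n + 2 - 1) → Fin 3 //
      ∀ (i : ℕ) (h : i + 1 < n + 2 - 1),
        ¬(f ⟨i, Nat.lt_of_succ_lt h⟩ = 0 ∧ f ⟨i + 1, h⟩ = 1) ∧
        ¬(f ⟨i, Nat.lt_of_succ_lt h⟩ = 1 ∧ f ⟨i + 1, h⟩ = 2)} = OCCAux.N (n+1) := rfl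
  rw [hRHS, OCCAux.N_succ, OCCAux.oddColoredCount_eq_o]
  have h1 := (OCCAux.key (n+1)).1
  rw [OCCAux.M_succ_two] at h1
  exact h1
end

section
/- For every positive integer k, the number of EVEN colored compositions of k+1 equals the sum, over all binary strings of length k, of the product of the lengths of the maximal runs of 1's in the string (the empty product, for strings containing no 1, counting as 1). -/
/-- Auxiliary: `runProdOnesAux cur l` is the product of the lengths of the maximal runs
of `true`s in a binary string that consists of a run of `cur` `true`s followed by `l`. -/
def runProdOnesAux : ℕ → List Bool → ℕ
  | cur, [] => if cur = 0 then 1 else cur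
  | cur, (true :: t) => runProdOnesAux (cur + 1) t
  | cur, (false :: t) => (if cur = 0 then 1 else cur) * runProdOnesAux 0 t

/-- The product of the lengths of the maximal runs of `true`s (i.e. 1's) in a binary
string; the empty product (no `true` present) counts as 1. -/
def runProdOnes (l : List Bool) : ℕ := runProdOnesAux 0 l

-- triple (A,B,C)
def tABC : ℕ → ℕ × ℕ × ℕ
  | 0 => (1, 0, 1)
  | (n+1) =>
    ((tABC n).1 + (tABC n).2.2, (tABC n).1 + (tABC n).2.1,
      (tABC n).1 + (tABC n).2.1 + (tABC n).2.2)

-- compositions as a Finset of lists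
def compL : ℕ → Finset (List ℕ)
  | 0 => {[]}
  | (n+1) => (Finset.range (n+1)).attach.biUnion
      (fun r => (compL r.1).image (fun l => (n + 1 - r.1) :: l))
decreasing_by exact Finset.mem_range.mp r.2

theorem mem_compL (n : ℕ) (l : List ℕ) :
    l ∈ compL n ↔ (∀ x ∈ l, 0 < x) ∧ l.sum = n := by
  induction n using Nat.strong_induction_on generalizing l with
  | _ n ih =>
    match n with
    | 0 =>
      simp [compL]
      constructor
      · rintro rfl; simp
      · rintro ⟨h1, h2⟩
        cases l with
        | nil => rfl
        | cons a t =>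
          exfalso
          have := h1 a (by simp)
          simp at h2
          omega
    | (m+1) =>
      rw [compL]
      simp only [Finset.mem_biUnion, Finset.mem_attach, Finset.mem_image, true_and,
        Subtype.exists]
      constructor
      · rintro ⟨r, hr, l', hl', rfl⟩
        have hr' : r < m + 1 := Finset.mem_range.mp hr
        obtain ⟨h1, h2⟩ := (ih r hr' l').mp hl'
        refine ⟨?_, ?_⟩
        · intro x hx
          simp at hx
          rcases hx with rfl | hx
          · omega
          · exact h1 x hx
        · simp [h2]; omega
      · rintro ⟨h1, h2⟩
        cases l with
        | nil => simp at h2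
        | cons a t =>
          have ha : 0 < a := h1 a (by simp)
          simp at h2
          refine ⟨t.sum, Finset.mem_range.mpr (by omega), t, ?_, ?_⟩
          · exact (ih t.sum (by omega) t).mpr ⟨fun x hx => h1 x (by simp [hx]), rfl⟩
          · congr 1; omega

/-- weight product with parity flag: `true` means current (head) position is colored. -/
def wprod : Bool → List ℕ → ℕ
  | _, [] => 1
  | false, _ :: t => wprod true t
  | true, p :: t => p * wprod false t

theorem prod_if_eq_wprod (l : List ℕ) (o : ℕ) :
    (∏ i ∈ Finset.range l.length, if (i + o) % 2 = 0 then l.getD i 1 else 1)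
      = wprod (decide (o % 2 = 0)) l := by
  induction l generalizing o with
  | nil => simp [wprod]
  | cons p t ih =>
    rw [List.length_cons, Finset.prod_range_succ']
    have h1 : ∀ i, (p :: t).getD (i + 1) 1 = t.getD i 1 := fun i => rfl
    have h2 : ∀ i, (i + 1 + o) = (i + (o + 1)) := fun i => by ring
    simp only [h1, h2, ih (o + 1)]
    rcases Nat.even_or_odd o with ho | ho
    · have : o % 2 = 0 := Nat.even_iff.mp ho
      have h3 : ¬ ((o + 1) % 2 = 0) := by omega
      simp [this, h3, wprod, Nat.mul_comm]
    · have : o % 2 = 1 := Nat.odd_iff.mp ho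
      have h3 : (o + 1) % 2 = 0 := by omega
      simp [this, h3, wprod]

theorem evenColoredCount_eq_sum_compL (n : ℕ) :
    evenColoredCount n = ∑ l ∈ compL n, wprod false l := by
  unfold evenColoredCount
  refine Finset.sum_bij (fun c _ => c.blocks) ?_ ?_ ?_ ?_
  · intro c _
    exact (mem_compL n c.blocks).mpr ⟨fun x hx => c.blocks_pos hx, c.blocks_sum⟩
  · intro c₁ _ c₂ _ h
    exact Composition.ext h
  · intro l hl
    obtain ⟨h1, h2⟩ := (mem_compL n l).mp hl
    exact ⟨⟨l, fun hx => h1 _ hx, h2⟩, Finset.mem_univ _, rfl⟩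
  · intro c _
    have := prod_if_eq_wprod c.blocks 1
    simpa using this

def Scomp (n : ℕ) (b : Bool) : ℕ := ∑ l ∈ compL n, wprod b l

theorem Scomp_zero (b : Bool) : Scomp 0 b = 1 := by
  simp [Scomp, compL, wprod]

theorem Scomp_succ (n : ℕ) (b : Bool) :
    Scomp (n + 1) b
      = ∑ r ∈ Finset.range (n + 1), (if b then n + 1 - r else 1) * Scomp r !b := by
  unfold Scomp
  rw [show compL (n + 1) = (Finset.range (n+1)).attach.biUnion
      (fun r => (compL r.1).image (fun l => (n + 1 - r.1) :: l)) from by rw [compL]]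
  rw [Finset.sum_biUnion]
  · rw [← Finset.sum_attach (Finset.range (n + 1))
      (fun r => (if b then n + 1 - r else 1) * ∑ l ∈ compL r, wprod (!b) l)]
    refine Finset.sum_congr rfl ?_
    intro r _
    rw [Finset.sum_image (by intro a _ c _ h; exact (List.cons.injEq _ _ _ _).mp h |>.2)]
    rw [Finset.mul_sum]
    refine Finset.sum_congr rfl ?_
    intro l _
    cases b <;> simp [wprod]
  · intro r _ r' _ hne
    simp only [Finset.disjoint_left]
    intro l hl hl'
    simp only [Finset.mem_image] at hl hl'
    obtain ⟨a, _, rfl⟩ := hl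
    obtain ⟨a', _, h⟩ := hl'
    have hr := Finset.mem_range.mp r.2
    have hr' := Finset.mem_range.mp r'.2
    have : n + 1 - r'.1 = n + 1 - r.1 := (List.cons.injEq _ _ _ _).mp h |>.1
    exact hne (Subtype.ext (by omega))

theorem Scomp_eq_tABC (n : ℕ) :
    Scomp (n + 1) false = (tABC n).2.2 ∧
    Scomp (n + 1) true = (tABC n).1 + (tABC n).2.1 ∧
    (∑ r ∈ Finset.range (n + 1), Scomp r false) = (tABC n).1 := by
  induction n with
  | zero =>
    refine ⟨?_, ?_, ?_⟩ <;>
      simp [Scomp_succ, tABC, Scomp_zero]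
  | succ n ih =>
    obtain ⟨hX, hY, hZ⟩ := ih
    have hZ' : (∑ r ∈ Finset.range (n + 1 + 1), Scomp r false)
        = (tABC n).1 + (tABC n).2.2 := by
      rw [Finset.sum_range_succ, hZ, hX]
    refine ⟨?_, ?_, ?_⟩
    · rw [Scomp_succ]
      simp only [if_neg (by simp : ¬ (false = true)), one_mul]
      rw [Finset.sum_range_succ]
      have e1 : (∑ r ∈ Finset.range (n + 1), Scomp r !false) = Scomp (n+1) false := by
        rw [Scomp_succ]; simp
      rw [e1, hX]
      simp only [Bool.not_false]
      rw [hY]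
      simp [tABC]
      ring
    · rw [Scomp_succ]
      simp only [if_pos rfl, if_true]
      have key : ∀ r ∈ Finset.range (n + 1 + 1),
          (n + 1 + 1 - r) * Scomp r (!true) = (n + 1 - r) * Scomp r false + Scomp r false := by
        intro r hr
        have : r < n + 2 := Finset.mem_range.mp hr
        have h2 : n + 1 + 1 - r = (n + 1 - r) + 1 := by omega
        simp only [Bool.not_true]
        rw [h2, Nat.add_mul, Nat.one_mul]
      rw [Finset.sum_congr rfl key, Finset.sum_add_distrib, hZ']
      rw [Finset.sum_range_succ]
      have e2 : (∑ r ∈ Finset.range (n + 1), (n + 1 - r) * Scomp r false)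
          = Scomp (n + 1) true := by
        rw [Scomp_succ]; simp
      rw [Nat.sub_self, Nat.zero_mul, Nat.add_zero, e2, hY]
      simp [tABC]
      ring
    · have : Scomp (n + 1 + 1) false = (tABC (n+1)).2.2 := by
        rw [Scomp_succ]
        simp only [if_neg (by simp : ¬ (false = true)), one_mul]
        rw [Finset.sum_range_succ]
        have e1 : (∑ r ∈ Finset.range (n + 1), Scomp r !false) = Scomp (n+1) false := by
          rw [Scomp_succ]; simp
        rw [e1, hX]
        simp only [Bool.not_false]
        rw [hY]
        simp [tABC]
        ring
      rw [Finset.sum_range_succ, hZ, hX]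
      simp [tABC]

theorem sum_runProdOnesAux (k : ℕ) :
    ∀ c : ℕ, (∑ f : Fin k → Bool, runProdOnesAux c (List.ofFn f))
      = if c = 0 then (tABC k).2.2 else (tABC k).1 * c + (tABC k).2.1 := by
  induction k with
  | zero =>
    intro c
    cases c with
    | zero => simp [runProdOnesAux, tABC]
    | succ c => simp [runProdOnesAux, tABC]
  | succ k ih =>
    intro c
    rw [← Equiv.sum_comp (Fin.consEquiv (fun _ : Fin (k+1) => Bool))
      (fun f => runProdOnesAux c (List.ofFn f))]
    rw [Fintype.sum_prod_type]
    rw [Fintype.sum_bool]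
    have hofn : ∀ (b : Bool) (f : Fin k → Bool),
        List.ofFn ((Fin.consEquiv (fun _ : Fin (k+1) => Bool)) (b, f))
          = b :: List.ofFn f := by
      intro b f
      rw [List.ofFn_succ]
      simp [Fin.consEquiv]
    simp only [hofn]
    have htrue : ∀ f : Fin k → Bool,
        runProdOnesAux c (true :: List.ofFn f) = runProdOnesAux (c+1) (List.ofFn f) :=
      fun f => rfl
    have hfalse : ∀ f : Fin k → Bool,
        runProdOnesAux c (false :: List.ofFn f)
          = (if c = 0 then 1 else c) * runProdOnesAux 0 (List.ofFn f) :=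
      fun f => rfl
    simp only [htrue, hfalse, ← Finset.mul_sum]
    rw [ih (c+1), ih 0]
    cases c with
    | zero =>
      simp [tABC]
    | succ c =>
      simp only [Nat.succ_ne_zero, if_false, if_pos rfl]
      simp [tABC]
      ring

theorem main (k : ℕ) :
    evenColoredCount (k + 1) = ∑ f : Fin k → Bool, runProdOnes (List.ofFn f) := by
  rw [evenColoredCount_eq_sum_compL]
  have h1 : (∑ l ∈ compL (k+1), wprod false l) = Scomp (k+1) false := rfl
  rw [h1, (Scomp_eq_tABC k).1]
  have h2 : ∀ f : Fin k → Bool, runProdOnes (List.ofFn f)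
      = runProdOnesAux 0 (List.ofFn f) := fun f => rfl
  simp only [h2]
  rw [sum_runProdOnesAux k 0]
  simp

/-- The number of EVEN colored compositions of `k + 1` equals the sum over all binary
strings of length `k` of the product of the lengths of the maximal runs of 1's. -/
theorem evenColoredCount_eq_sum_runProd (k : ℕ) (hk : 0 < k) :
    evenColoredCount (k + 1) = ∑ f : Fin k → Bool, runProdOnes (List.ofFn f) :=
  main k
end

section
/- For every positive integer k, the number of ODD colored compositions of k equals the sum, over all binary strings of length k whose first symbol is 1, of the product of the lengths of the maximal runs of 1's in the string. -/
/-!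
A composition `(p₁, …, p_r)` of `k` is encoded by the binary string `1^p₁ 0^p₂ 1^p₃ ⋯`
of length `k`. Since all parts are positive, this is a bijection onto the strings starting
with `1`, and the maximal runs of `1`'s of the string are exactly the parts in odd positions,
so the weight of a composition is the run-length product of its string.
-/

open Finset

lemma List.replicate_append_inj {α : Type*} {a : α} {r r' : List α} (hr : a ∉ r.head?)
    (hr' : a ∉ r'.head?) :
    ∀ {n n' : ℕ}, replicate n a ++ r = replicate n' a ++ r' → n = n' ∧ r = r'
  | 0, 0, h => ⟨rfl, by simpa using h⟩
  | 0, n' + 1, h => by simp [replicate_succ] at h; simp [h] at hr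
  | n + 1, 0, h => by simp [replicate_succ] at h; simp [← h] at hr'
  | n + 1, n' + 1, h => by
    simp only [replicate_succ, cons_append, cons.injEq, true_and] at h
    obtain ⟨rfl, rfl⟩ := replicate_append_inj hr hr' h
    exact ⟨rfl, rfl⟩

def alternatingRuns : List ℕ → Bool → List Bool
  | [], _ => []
  | p :: t, b => List.replicate p b ++ alternatingRuns t (!b)

section alternatingRuns

variable {L : List ℕ} {b : Bool}

@[simp]
lemma length_alternatingRuns : ∀ (L : List ℕ) (b : Bool), (alternatingRuns L b).length = L.sum
  | [], _ => rfl
  | p :: t, b => by simp [alternatingRuns, length_alternatingRuns t]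

lemma head?_alternatingRuns (hL : ∀ {p}, p ∈ L → 0 < p) :
    ∀ x ∈ (alternatingRuns L b).head?, x = b := by
  cases L with
  | nil => simp [alternatingRuns]
  | cons p t =>
    obtain ⟨q, rfl⟩ := Nat.exists_eq_add_of_lt (hL List.mem_cons_self)
    simp [alternatingRuns, List.replicate_succ]

lemma not_mem_head?_alternatingRuns (hL : ∀ {p}, p ∈ L → 0 < p) :
    b ∉ (alternatingRuns L (!b)).head? := fun hb => by
  simpa using head?_alternatingRuns hL b hb

lemma alternatingRuns_inj : ∀ {L L' : List ℕ} {b : Bool}, (∀ {p}, p ∈ L → 0 < p) →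
    (∀ {p}, p ∈ L' → 0 < p) → alternatingRuns L b = alternatingRuns L' b → L = L'
  | [], [], _, _, _, _ => rfl
  | [], p :: t, b, _, hL', h => by
    obtain ⟨q, rfl⟩ := Nat.exists_eq_add_of_lt (hL' List.mem_cons_self)
    simp [alternatingRuns, List.replicate_succ] at h
  | p :: t, [], b, hL, _, h => by
    obtain ⟨q, rfl⟩ := Nat.exists_eq_add_of_lt (hL List.mem_cons_self)
    simp [alternatingRuns, List.replicate_succ] at h
  | p :: t, p' :: t', b, hL, hL', h => by
    have ht : ∀ {q}, q ∈ t → 0 < q := fun hq => hL (List.mem_cons_of_mem p hq)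
    have ht' : ∀ {q}, q ∈ t' → 0 < q := fun hq => hL' (List.mem_cons_of_mem p' hq)
    simp only [alternatingRuns] at h
    obtain ⟨rfl, htail⟩ := List.replicate_append_inj (not_mem_head?_alternatingRuns ht)
      (not_mem_head?_alternatingRuns ht') h
    rw [alternatingRuns_inj ht ht' htail]

lemma exists_alternatingRuns_eq : ∀ (s : List Bool) (b : Bool), (∀ x ∈ s.head?, x = b) →
    ∃ L, (∀ {p}, p ∈ L → 0 < p) ∧ alternatingRuns L b = s
  | [], _, _ => ⟨[], by simp, rfl⟩
  | x :: t, b, hs => by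
    obtain rfl : x = b := hs x rfl
    by_cases ht : x ∈ t.head?
    · obtain ⟨L, hL, hLt⟩ := exists_alternatingRuns_eq t x (by simp_all)
      cases L with
      | nil => simp [← hLt, alternatingRuns] at ht
      | cons p L =>
        refine ⟨(p + 1) :: L, ?_, ?_⟩
        · simp_all
        · simpa [alternatingRuns, List.replicate_succ] using hLt
    · obtain ⟨L, hL, hLt⟩ := exists_alternatingRuns_eq t (!x) (fun y hy => by
        cases x <;> cases y <;> simp_all)
      refine ⟨1 :: L, ?_, ?_⟩
      · simp_all
      · simpa [alternatingRuns] using hLt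

end alternatingRuns

def oddPositionsProd : List ℕ → ℕ
  | [] => 1
  | [p] => p
  | p :: _ :: t => p * oddPositionsProd t

lemma oddPositionsProd_eq_prod_range : ∀ L : List ℕ,
    oddPositionsProd L = ∏ i ∈ range L.length, if (i + 1) % 2 = 1 then L.getD i 1 else 1
  | [] => rfl
  | [p] => by simp [oddPositionsProd]
  | p :: q :: t => by
    have hparity (i : ℕ) : (i + 1 + 1 + 1) % 2 = (i + 1) % 2 := by omega
    rw [oddPositionsProd, oddPositionsProd_eq_prod_range t, List.length_cons, List.length_cons,
      prod_range_succ', prod_range_succ']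
    simp only [List.getD_cons_succ, List.getD_cons_zero, hparity]
    norm_num [mul_comm]

lemma runProdOnesAux_replicate_true_append (cur p : ℕ) (r : List Bool) :
    runProdOnesAux cur (List.replicate p true ++ r) = runProdOnesAux (cur + p) r := by
  induction p generalizing cur with
  | zero => rfl
  | succ p ih =>
    rw [List.replicate_succ, List.cons_append, runProdOnesAux, ih, add_assoc, add_comm 1]

lemma runProdOnesAux_replicate_false_append (p : ℕ) (r : List Bool) :
    runProdOnesAux 0 (List.replicate p false ++ r) = runProdOnesAux 0 r := by
  induction p with
  | zero => rfl
  | succ p ih =>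
    rw [List.replicate_succ, List.cons_append, runProdOnesAux, ih, if_pos rfl, one_mul]

lemma runProdOnes_alternatingRuns : ∀ {L : List ℕ}, (∀ {p}, p ∈ L → 0 < p) →
    runProdOnes (alternatingRuns L true) = oddPositionsProd L
  | [], _ => rfl
  | [p], hL => by
    rw [runProdOnes, alternatingRuns, alternatingRuns, runProdOnesAux_replicate_true_append,
      zero_add, runProdOnesAux, if_neg (hL List.mem_cons_self).ne', oddPositionsProd]
  | p :: q :: t, hL => by
    obtain ⟨q, rfl⟩ := Nat.exists_eq_add_of_lt (hL (List.mem_cons_of_mem _ List.mem_cons_self))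
    have ht : ∀ {p}, p ∈ t → 0 < p := fun hp =>
      hL (List.mem_cons_of_mem _ (List.mem_cons_of_mem _ hp))
    rw [runProdOnes, alternatingRuns, alternatingRuns, Bool.not_true, Bool.not_false,
      runProdOnesAux_replicate_true_append, zero_add, List.replicate_succ, List.cons_append,
      runProdOnesAux, if_neg (hL List.mem_cons_self).ne', runProdOnesAux_replicate_false_append,
      ← runProdOnes, runProdOnes_alternatingRuns ht, oddPositionsProd]

def Composition.alternatingString {n : ℕ} (c : Composition n) : Fin n → Bool :=
  fun i => (alternatingRuns c.blocks true).getD i false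

lemma Composition.ofFn_alternatingString {n : ℕ} (c : Composition n) :
    List.ofFn c.alternatingString = alternatingRuns c.blocks true :=
  List.ext_getElem (by simp) fun _ _ h => by
    rw [List.getElem_ofFn, alternatingString, List.getD_eq_getElem _ _ h]

lemma sum_composition_eq_sum_filter_head {M : Type*} [AddCommMonoid M] {k : ℕ} (hk : 0 < k)
    (g : List Bool → M) :
    ∑ c : Composition k, g (alternatingRuns c.blocks true) =
      ∑ f ∈ univ.filter (fun f : Fin k → Bool => f ⟨0, hk⟩ = true), g (List.ofFn f) := by
  have head?_ofFn (f : Fin k → Bool) : (List.ofFn f).head? = some (f ⟨0, hk⟩) := by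
    simp [List.head?_eq_getElem?, hk]
  refine sum_nbij Composition.alternatingString (fun c _ => ?_) (fun c _ c' _ h => ?_)
    (fun f hf => ?_) (fun c _ => by rw [c.ofFn_alternatingString])
  · have hhead := head?_alternatingRuns (b := true) c.blocks_pos
    rw [← c.ofFn_alternatingString, head?_ofFn] at hhead
    exact mem_filter.2 ⟨mem_univ _, hhead _ rfl⟩
  · refine Composition.ext (alternatingRuns_inj (b := true) c.blocks_pos c'.blocks_pos ?_)
    rw [← c.ofFn_alternatingString, ← c'.ofFn_alternatingString, h]
  · obtain ⟨L, hL, hLf⟩ := exists_alternatingRuns_eq (List.ofFn f) true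
      (by simpa [head?_ofFn] using (mem_filter.1 hf).2)
    have hsum : L.sum = k := by rw [← length_alternatingRuns L true, hLf, List.length_ofFn]
    refine ⟨⟨L, hL, hsum⟩, mem_univ _, List.ofFn_injective ?_⟩
    rw [Composition.ofFn_alternatingString, hLf]

/-- The number of ODD colored compositions of `k` equals the sum over all binary
strings of length `k` starting with a 1 of the product of the lengths of the
maximal runs of 1's. -/
theorem oddColoredCount_eq_sum_runProd (k : ℕ) (hk : 0 < k) :
    oddColoredCount k =
      ∑ f ∈ Finset.univ.filter (fun f : Fin k → Bool => f ⟨0, hk⟩ = true),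
        runProdOnes (List.ofFn f) := by
  rw [oddColoredCount, ← sum_composition_eq_sum_filter_head hk runProdOnes]
  refine sum_congr rfl fun c _ => ?_
  rw [runProdOnes_alternatingRuns c.blocks_pos, oddPositionsProd_eq_prod_range]
end

section
/- Let m ≥ 2, let k be an integer with 1 ≤ k ≤ m−1, and let ℓ be a positive integer. Then c_{m,k+1}(ℓ+1) = c_{m,k+1}(ℓ) + c_{m,k}(ℓ), where c_{m,k}(ℓ) denotes the number of (m,k)-n-colored compositions of ℓ. -/
/-!
Sort the compositions of `ℓ + 1` by their first part. Deleting a first part equal to `1` gives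
a composition of `ℓ` and moves every other part one position forward, so the colouring pattern
`k + 1` becomes `k`. Lowering a first part `≥ 2` by one gives a composition of `ℓ` of the same
`(k + 1)`-weight, because for `k ≢ 0 (mod m)` the first position is never coloured.
-/

/-- The number of `(m,k)`-`n`-colored compositions of `ℓ`: compositions where each part
whose position `i` (positions counted from 1) satisfies `i ≡ k (mod m)` gets a color in
`{1, …, pᵢ}`, i.e. `∑` over compositions of `∏` of the parts in positions `≡ k (mod m)`. -/
def mkColoredCount (m k ℓ : ℕ) : ℕ :=
  ∑ c : Composition ℓ, ∏ i ∈ Finset.range c.blocks.length,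
    if (i + 1) % m = k % m then c.blocks.getD i 1 else 1

open Finset

def coloredWeight (m k : ℕ) (l : List ℕ) : ℕ :=
  ∏ i ∈ range l.length, if (i + 1) % m = k % m then l.getD i 1 else 1

theorem mkColoredCount_eq_sum_coloredWeight (m k ℓ : ℕ) :
    mkColoredCount m k ℓ = ∑ c : Composition ℓ, coloredWeight m k c.blocks := rfl

theorem coloredWeight_cons (m k a : ℕ) (l : List ℕ) :
    coloredWeight m (k + 1) (a :: l) =
      (if 1 ≡ k + 1 [MOD m] then a else 1) * coloredWeight m k l := by
  rw [coloredWeight, List.length_cons, prod_range_succ', mul_comm]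
  congr 1
  refine prod_congr rfl fun i _ => ?_
  rw [List.getD_cons_succ]
  exact if_congr (Nat.ModEq.add_iff_right rfl) rfl rfl

theorem Nat.one_modEq_add_one_iff_dvd {m k : ℕ} : 1 ≡ k + 1 [MOD m] ↔ m ∣ k := by
  rw [← zero_add 1, Nat.ModEq.add_iff_right rfl, Nat.ModEq.comm, Nat.modEq_zero_iff_dvd]

theorem coloredWeight_cons_of_not_dvd {m k : ℕ} (hk : ¬m ∣ k) (a : ℕ) (l : List ℕ) :
    coloredWeight m (k + 1) (a :: l) = coloredWeight m k l := by
  rw [coloredWeight_cons, if_neg (mt Nat.one_modEq_add_one_iff_dvd.mp hk), one_mul]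

theorem coloredWeight_modifyHead_of_not_dvd {m k : ℕ} (hk : ¬m ∣ k) (f : ℕ → ℕ)
    (l : List ℕ) : coloredWeight m (k + 1) (l.modifyHead f) = coloredWeight m (k + 1) l := by
  cases l with
  | nil => rfl
  | cons a l =>
    rw [List.modifyHead_cons, coloredWeight_cons_of_not_dvd hk, coloredWeight_cons_of_not_dvd hk]

namespace Composition

variable {n : ℕ}

theorem exists_blocks_eq_cons (c : Composition (n + 1)) : ∃ a l, c.blocks = a :: l :=
  List.exists_cons_of_ne_nil (mt c.blocks_eq_nil.mp n.succ_ne_zero)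

@[simps]
def consOne (c : Composition n) : Composition (n + 1) where
  blocks := 1 :: c.blocks
  blocks_pos hi := List.forall_mem_cons.2 ⟨Nat.one_pos, fun _ => c.blocks_pos⟩ _ hi
  blocks_sum := by simp [c.blocks_sum, add_comm]

@[simps]
def succHead (c : Composition (n + 1)) : Composition (n + 2) where
  blocks := c.blocks.modifyHead (· + 1)
  blocks_pos := by
    obtain ⟨a, l, hc⟩ := c.exists_blocks_eq_cons
    have hl : ∀ i ∈ l, 0 < i := fun _ hi => c.blocks_pos (hc ▸ List.mem_cons_of_mem a hi)
    rw [hc, List.modifyHead_cons]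
    exact fun {i} hi => List.forall_mem_cons.2 ⟨a.succ_pos, hl⟩ i hi
  blocks_sum := by
    obtain ⟨a, l, hc⟩ := c.exists_blocks_eq_cons
    have hsum := c.blocks_sum
    rw [hc, List.sum_cons] at hsum
    rw [hc, List.modifyHead_cons, List.sum_cons]
    omega

theorem consOne_injective : Function.Injective (consOne : Composition n → _) :=
  fun _ _ h => Composition.ext (List.cons_injective (congrArg blocks h))

theorem succHead_injective : Function.Injective (succHead : Composition (n + 1) → _) := by
  intro c d h
  obtain ⟨a, l, hc⟩ := c.exists_blocks_eq_cons
  obtain ⟨b, l', hd⟩ := d.exists_blocks_eq_cons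
  have h' := congrArg blocks h
  simp only [succHead_blocks, hc, hd, List.modifyHead_cons, List.cons.injEq,
    add_left_inj] at h'
  ext1
  rw [hc, hd, h'.1, h'.2]

theorem consOne_ne_succHead (c d : Composition (n + 1)) : c.consOne ≠ d.succHead := by
  intro h
  obtain ⟨a, l, hd⟩ := d.exists_blocks_eq_cons
  have h' := congrArg blocks h
  simp only [consOne_blocks, succHead_blocks, hd, List.modifyHead_cons, List.cons.injEq] at h'
  exact (d.blocks_pos (hd ▸ List.mem_cons_self)).ne' (by omega)

theorem bijective_sumElim_consOne_succHead :
    Function.Bijective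
      (Sum.elim consOne succHead : Composition (n + 1) ⊕ Composition (n + 1) → _) := by
  refine ⟨consOne_injective.sumElim succHead_injective consOne_ne_succHead, ?_⟩
  rintro ⟨_ | ⟨_ | _ | a, l⟩, hpos, hsum⟩
  · simp at hsum
  · simp at hpos
  · refine ⟨.inl ⟨l, fun hi => hpos (List.mem_cons_of_mem 1 hi), ?_⟩, rfl⟩
    simp only [List.sum_cons] at hsum
    omega
  · have hl : ∀ i ∈ l, 0 < i := fun _ hi => hpos (List.mem_cons_of_mem _ hi)
    refine ⟨.inr ⟨(a + 1) :: l, fun hi => List.forall_mem_cons.2 ⟨a.succ_pos, hl⟩ _ hi, ?_⟩, rfl⟩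
    simp only [List.sum_cons] at hsum ⊢
    omega

theorem sum_consOne_add_sum_succHead {M : Type*} [AddCommMonoid M]
    (f : Composition (n + 2) → M) :
    ∑ c : Composition (n + 1), f c.consOne + ∑ c : Composition (n + 1), f c.succHead =
      ∑ c : Composition (n + 2), f c := by
  calc _ = ∑ x, f (Sum.elim consOne succHead x) := (Fintype.sum_sum_type _).symm
    _ = _ := bijective_sumElim_consOne_succHead.sum_comp f

end Composition

theorem mkColoredCount_add_two_of_not_dvd {m k : ℕ} (hk : ¬m ∣ k) (n : ℕ) :
    mkColoredCount m (k + 1) (n + 2) =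
      mkColoredCount m (k + 1) (n + 1) + mkColoredCount m k (n + 1) := by
  simp only [mkColoredCount_eq_sum_coloredWeight]
  rw [← Composition.sum_consOne_add_sum_succHead, add_comm]
  congr 1
  · exact sum_congr rfl fun c _ => coloredWeight_modifyHead_of_not_dvd hk _ _
  · exact sum_congr rfl fun c _ => coloredWeight_cons_of_not_dvd hk _ _

theorem mkColoredCount_succ_general (m k ℓ : ℕ) (hk1 : 1 ≤ k) (hk2 : k ≤ m - 1)
    (hℓ : 0 < ℓ) :
    mkColoredCount m (k + 1) (ℓ + 1) = mkColoredCount m (k + 1) ℓ + mkColoredCount m k ℓ := by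
  obtain ⟨n, rfl⟩ : ∃ n, ℓ = n + 1 := ⟨ℓ - 1, by omega⟩
  exact mkColoredCount_add_two_of_not_dvd (Nat.not_dvd_of_pos_of_lt hk1 (by omega)) n

/-- `c_{m,k+1}(ℓ+1) = c_{m,k+1}(ℓ) + c_{m,k}(ℓ)` for `m ≥ 2`, `1 ≤ k ≤ m - 1`, `ℓ ≥ 1`. -/
theorem mkColoredCount_succ (m k ℓ : ℕ) (hm : 2 ≤ m) (hk1 : 1 ≤ k) (hk2 : k ≤ m - 1)
    (hℓ : 0 < ℓ) :
    mkColoredCount m (k + 1) (ℓ + 1) = mkColoredCount m (k + 1) ℓ + mkColoredCount m k ℓ :=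
  mkColoredCount_succ_general m k ℓ hk1 hk2 hℓ
end

section
/- The sequence e(ℓ), the number of EVEN colored compositions of ℓ, satisfies e(1) = 1, e(2) = 2, e(3) = 5, and e(n) = 3·e(n−1) − 2·e(n−2) + e(n−3) for all n ≥ 4. -/
/-- The Finset of compositions of `n` as lists of positive parts. -/
def comps : ℕ → Finset (List ℕ)
  | 0 => {[]}
  | (n+1) => (Finset.range (n+1)).attach.biUnion
      (fun m => (comps m.1).image (List.cons (n+1-m.1)))
decreasing_by exact Finset.mem_range.mp m.2

lemma mem_comps : ∀ (n : ℕ) (l : List ℕ),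
    l ∈ comps n ↔ (∀ x ∈ l, 0 < x) ∧ l.sum = n := by
  intro n
  induction n using Nat.strong_induction_on with
  | _ n ih =>
    match n with
    | 0 =>
      intro l
      rw [comps]
      simp only [Finset.mem_singleton]
      constructor
      · rintro rfl; simp
      · rintro ⟨h1, h2⟩
        cases l with
        | nil => rfl
        | cons p t =>
          exfalso
          have := h1 p (by simp)
          simp at h2
          omega
    | (m+1) =>
      intro l
      rw [comps]
      simp only [Finset.mem_biUnion, Finset.mem_attach, Finset.mem_image, true_and,
        Subtype.exists, Finset.mem_range]
      constructor
      · rintro ⟨a, ha, t, ht, rfl⟩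
        obtain ⟨hpos, hsum⟩ := (ih a ha t).mp ht
        refine ⟨?_, ?_⟩
        · intro x hx
          rcases List.mem_cons.mp hx with rfl | hx
          · omega
          · exact hpos x hx
        · simp [hsum]; omega
      · rintro ⟨h1, h2⟩
        cases l with
        | nil => simp at h2
        | cons p t =>
          have hp : 0 < p := h1 p (by simp)
          simp only [List.sum_cons] at h2
          refine ⟨t.sum, by omega, t, ?_, ?_⟩
          · exact (ih t.sum (by omega) t).mpr ⟨fun x hx => h1 x (by simp [hx]), rfl⟩
          · congr 1; omega

/-- Weight with a parity offset `r`. -/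
def P (r : ℕ) (l : List ℕ) : ℕ :=
  ∏ i ∈ Finset.range l.length, if (i + 1 + r) % 2 = 0 then l.getD i 1 else 1

lemma P_nil (r : ℕ) : P r [] = 1 := by simp [P]

lemma P_cons (r p : ℕ) (t : List ℕ) :
    P r (p :: t) = (if (1 + r) % 2 = 0 then p else 1) * P (r+1) t := by
  unfold P
  rw [show (p :: t).length = t.length + 1 from rfl, Finset.prod_range_succ']
  simp only [List.getD_cons_succ, List.getD_cons_zero]
  rw [mul_comm]
  congr 1
  apply Finset.prod_congr rfl
  intro i _
  congr 2
  omega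

lemma P_mod (r : ℕ) (l : List ℕ) : P (r + 2) l = P r l := by
  unfold P
  apply Finset.prod_congr rfl
  intro i _
  have : (i + 1 + (r + 2)) % 2 = (i + 1 + r) % 2 := by omega
  rw [this]

def fC (n : ℕ) : ℕ := ∑ l ∈ comps n, P 0 l
def gC (n : ℕ) : ℕ := ∑ l ∈ comps n, P 1 l

lemma sum_comps_succ (n : ℕ) (φ : List ℕ → ℕ) :
    ∑ l ∈ comps (n+1), φ l
      = ∑ m ∈ Finset.range (n+1), ∑ t ∈ comps m, φ ((n+1-m) :: t) := by
  rw [comps]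
  rw [Finset.sum_biUnion]
  · rw [← Finset.sum_attach (Finset.range (n+1))
      (fun m => ∑ t ∈ comps m, φ ((n+1-m) :: t))]
    apply Finset.sum_congr rfl
    intro m _
    exact Finset.sum_image (fun t _ t' _ h => (List.cons_injective h))
  · intro a _ b _ hab
    simp only [Function.onFun]
    rw [Finset.disjoint_left]
    intro l hla hlb
    simp only [Finset.mem_image] at hla hlb
    obtain ⟨t, _, rfl⟩ := hla
    obtain ⟨t', _, h⟩ := hlb
    have ha := Finset.mem_range.mp a.2
    have hb := Finset.mem_range.mp b.2
    have : n + 1 - b.1 = n + 1 - a.1 := (List.cons.injEq _ _ _ _ ▸ h).1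
    exact hab (Subtype.ext (by omega))

lemma fC_zero : fC 0 = 1 := by simp [fC, comps, P_nil]
lemma gC_zero : gC 0 = 1 := by simp [gC, comps, P_nil]

lemma fC_succ (n : ℕ) : fC (n+1) = ∑ m ∈ Finset.range (n+1), gC m := by
  rw [fC, sum_comps_succ]
  apply Finset.sum_congr rfl
  intro m _
  apply Finset.sum_congr rfl
  intro t _
  rw [P_cons]
  norm_num [gC]

lemma gC_succ (n : ℕ) : gC (n+1) = ∑ m ∈ Finset.range (n+1), (n+1-m) * fC m := by
  rw [gC, sum_comps_succ]
  apply Finset.sum_congr rfl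
  intro m _
  rw [fC, Finset.mul_sum]
  apply Finset.sum_congr rfl
  intro t _
  rw [P_cons]
  norm_num [P_mod 0 t]

lemma fC_step (k : ℕ) : fC (k+2) = fC (k+1) + gC (k+1) := by
  rw [fC_succ, fC_succ, Finset.sum_range_succ]

lemma gC_step (k : ℕ) : gC (k+2) = gC (k+1) + ∑ m ∈ Finset.range (k+2), fC m := by
  rw [gC_succ, gC_succ]
  rw [Finset.sum_range_succ (fun m => (k+2-m) * fC m)]
  rw [Finset.sum_range_succ (fun m => fC m)]
  have hlast : k + 2 - (k+1) = 1 := by omega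
  rw [hlast, one_mul]
  have h2 : ∑ x ∈ Finset.range (k+1), (k+2-x) * fC x
      = ∑ m ∈ Finset.range (k+1), ((k+1-m) * fC m + fC m) := by
    apply Finset.sum_congr rfl
    intro m hm
    have := Finset.mem_range.mp hm
    have h3 : k + 2 - m = (k+1-m) + 1 := by omega
    rw [h3, add_mul, one_mul]
  rw [h2, Finset.sum_add_distrib]
  ring

lemma gC_rec (k : ℕ) : gC (k+3) + gC (k+1) = 2 * gC (k+2) + fC (k+2) := by
  have h1 : gC (k+3) = gC (k+2) + ∑ m ∈ Finset.range (k+3), fC m := gC_step (k+1)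
  have h2 : gC (k+2) = gC (k+1) + ∑ m ∈ Finset.range (k+2), fC m := gC_step k
  rw [Finset.sum_range_succ] at h1
  omega

lemma fC_rec (k : ℕ) : fC (k+4) + 2 * fC (k+2) = 3 * fC (k+3) + fC (k+1) := by
  have h1 : fC (k+4) = fC (k+3) + gC (k+3) := fC_step (k+2)
  have h2 : fC (k+3) = fC (k+2) + gC (k+2) := fC_step (k+1)
  have h3 : fC (k+2) = fC (k+1) + gC (k+1) := fC_step k
  have h4 := gC_rec k
  omega

lemma evenColoredCount_eq (n : ℕ) : evenColoredCount n = fC n := by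
  rw [evenColoredCount, fC]
  apply Finset.sum_bij (fun (c : Composition n) _ => c.blocks)
  · intro c _
    exact (mem_comps n c.blocks).mpr ⟨fun x hx => c.blocks_pos hx, c.blocks_sum⟩
  · intro c _ c' _ h
    exact Composition.ext h
  · intro l hl
    obtain ⟨h1, h2⟩ := (mem_comps n l).mp hl
    exact ⟨⟨l, fun {x} hx => h1 x hx, h2⟩, Finset.mem_univ _, rfl⟩
  · intro c _
    unfold P
    apply Finset.prod_congr rfl
    intro i _
    norm_num

/-- `e(1) = 1`, `e(2) = 2`, `e(3) = 5`, and `e(n) = 3e(n-1) - 2e(n-2) + e(n-3)`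
for all `n ≥ 4` (stated in `ℤ` so that subtraction is honest). -/
theorem evenColoredCount_recurrence :
    evenColoredCount 1 = 1 ∧ evenColoredCount 2 = 2 ∧ evenColoredCount 3 = 5 ∧
    ∀ n : ℕ, 4 ≤ n →
      (evenColoredCount n : ℤ) =
        3 * evenColoredCount (n - 1) - 2 * evenColoredCount (n - 2)
          + evenColoredCount (n - 3) := by
  have e1 : evenColoredCount 1 = 1 := by
    rw [evenColoredCount_eq, show (1:ℕ) = 0 + 1 from rfl, fC_succ]
    simp [gC_zero]
  have e2 : evenColoredCount 2 = 2 := by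
    rw [evenColoredCount_eq, fC_step, ← evenColoredCount_eq, e1]
    rw [show (1:ℕ) = 0 + 1 from rfl, gC_succ]
    simp [fC_zero]
  have e3 : evenColoredCount 3 = 5 := by
    rw [evenColoredCount_eq, fC_step]
    have hg2 : gC 2 = 3 := by
      rw [show (2:ℕ) = 1 + 1 from rfl, gC_succ]
      rw [Finset.sum_range_succ, Finset.sum_range_one]
      rw [fC_zero, show fC 1 = 1 from by rw [← evenColoredCount_eq]; exact e1]
    rw [hg2, show fC 2 = 2 from by rw [← evenColoredCount_eq]; exact e2]
  refine ⟨e1, e2, e3, ?_⟩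
  intro n hn
  obtain ⟨k, rfl⟩ : ∃ k, n = k + 4 := ⟨n - 4, by omega⟩
  have h := fC_rec k
  rw [evenColoredCount_eq, show k+4-1 = k+3 from rfl, show k+4-2=k+2 from rfl,
    show k+4-3=k+1 from rfl, evenColoredCount_eq, evenColoredCount_eq, evenColoredCount_eq]
  omega
end

section
/- Let m ≥ 2 and let k be an integer with 1 ≤ k ≤ m. In the ring of formal power series ℤ[[X]], the generating function F_{m,k}(X) = Σ_{ℓ≥1} c_{m,k}(ℓ)·X^ℓ of the numbers c_{m,k}(ℓ) of (m,k)-n-colored compositions satisfies ((1−X)^{m+1} − X^m)·F_{m,k}(X) = X^m + Σ_{j=1}^{k−1} X^j·(1−X)^{m−j+1} + Σ_{t=k}^{m−1} X^t·(1−X)^{m−t}. -/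
/-- The generating function `F_{m,k}(X) = ∑_{ℓ ≥ 1} c_{m,k}(ℓ) Xᶫ ∈ ℤ[[X]]` of the
numbers of `(m,k)`-`n`-colored compositions; its constant coefficient is `0`. -/
def Fmk (m k : ℕ) : PowerSeries ℤ :=
  PowerSeries.mk fun ℓ => if ℓ = 0 then 0 else (mkColoredCount m k ℓ : ℤ)

/-!
Cutting off the first part of a composition shifts the positions of the remaining parts by
one, so `F_{m,k+1} = W · (1 + F_{m,k})`, where `W = X/(1-X)` if the first part is uncolored and
`W = X/(1-X)²` if it is colored (`k ≡ 0 mod m`). Hence `(1-X) F_{m,k} = X (1 + F_{m,k-1})` for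
`2 ≤ k ≤ m`, and `(1-X)² F_{m,1} = X (1 + F_{m,m})`. With `U = (1-X)^{m+1} - X^m`, the claimed
numerators `N_k` satisfy `(1-X) N_k = X (U + N_{k-1})` and `(1-X)² N_1 = X (U + N_m)`, the same
relations as `U F_{m,k}`, so the defects `D_k = U F_{m,k} - N_k` satisfy
`(1-X) D_k = X D_{k-1}` and `(1-X)² D_1 = X D_m`. Going once around this cycle gives
`U D_1 = 0`, and since `ℤ⟦X⟧` is a domain all `D_k` vanish.
-/

open Finset PowerSeries

namespace Composition

variable {n : ℕ}

theorem blocks_eq_headI_cons_tail (c : Composition (n + 1)) :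
    c.blocks = c.blocks.headI :: c.blocks.tail := by
  cases h : c.blocks
  · simpa [h] using c.blocks_sum
  · rfl

theorem one_le_blocks_headI (c : Composition (n + 1)) : 1 ≤ c.blocks.headI :=
  c.blocks_pos (c.blocks_eq_headI_cons_tail ▸ List.mem_cons_self)

theorem pred_headI_succ_cons_tail (c : Composition (n + 1)) :
    (c.blocks.headI - 1 + 1) :: c.blocks.tail = c.blocks := by
  rw [Nat.sub_add_cancel c.one_le_blocks_headI, ← c.blocks_eq_headI_cons_tail]

def cons (p : ℕ) (c : Composition (n - p)) (hp : p ≤ n) : Composition (n + 1) where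
  blocks := (p + 1) :: c.blocks
  blocks_pos h := (List.mem_cons.1 h).elim (· ▸ p.succ_pos) c.blocks_pos
  blocks_sum := by rw [List.sum_cons, c.blocks_sum]; omega

def tail (c : Composition (n + 1)) : Composition (n - (c.blocks.headI - 1)) where
  blocks := c.blocks.tail
  blocks_pos h := c.blocks_pos (List.mem_of_mem_tail h)
  blocks_sum := by
    have := List.headI_add_tail_sum c.blocks
    have := c.one_le_blocks_headI
    rw [c.blocks_sum] at *
    omega

theorem sum_blocks_eq_sum_cons {M : Type*} [AddCommMonoid M] (f : List ℕ → M) :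
    ∑ c : Composition (n + 1), f c.blocks =
      ∑ p ∈ range (n + 1), ∑ c : Composition (n - p), f ((p + 1) :: c.blocks) := by
  rw [sum_sigma']
  refine sum_bij' (fun c _ => ⟨c.blocks.headI - 1, c.tail⟩)
    (fun x hx => x.2.cons x.1 (Nat.lt_succ_iff.1 (mem_range.1 (mem_sigma.1 hx).1)))
    (fun c _ => by simpa using c.blocks.headI_le_sum.trans_eq c.blocks_sum)
    (fun _ _ => mem_univ _) ?_ ?_ ?_
  · intro c _
    ext1
    exact c.pred_headI_succ_cons_tail
  · rintro ⟨p, c⟩ _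
    rfl
  · intro c _
    exact congrArg f c.pred_headI_succ_cons_tail.symm

end Composition

def colorWeight (m k : ℕ) (l : List ℕ) : ℕ :=
  ∏ i ∈ range l.length, if (i + 1) % m = k % m then l.getD i 1 else 1

theorem colorWeight_cons (m k p : ℕ) (l : List ℕ) :
    colorWeight m (k + 1) (p :: l) =
      (if 1 % m = (k + 1) % m then p else 1) * colorWeight m k l := by
  have shift (i : ℕ) : (i + 1 + 1) % m = (k + 1) % m ↔ (i + 1) % m = k % m :=
    ⟨Nat.ModEq.add_right_cancel' 1, Nat.ModEq.add_right 1⟩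
  simp [colorWeight, prod_range_succ', shift, mul_comm]

theorem mkColoredCount_eq_sum_colorWeight (m k ℓ : ℕ) :
    mkColoredCount m k ℓ = ∑ c : Composition ℓ, colorWeight m k c.blocks := rfl

theorem mkColoredCount_zero_right (m k : ℕ) : mkColoredCount m k 0 = 1 := by
  have (c : Composition 0) : c.blocks = [] := c.blocks_eq_nil.2 rfl
  simp [mkColoredCount_eq_sum_colorWeight, colorWeight, this, composition_card]

theorem mkColoredCount_succ_succ (m k n : ℕ) :
    mkColoredCount m (k + 1) (n + 1) =
      ∑ p ∈ range (n + 1),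
        (if 1 % m = (k + 1) % m then p + 1 else 1) * mkColoredCount m k (n - p) := by
  simp only [mkColoredCount_eq_sum_colorWeight, Composition.sum_blocks_eq_sum_cons,
    colorWeight_cons, mul_sum]

theorem mkColoredCount_of_modEq {m k k' : ℕ} (h : k ≡ k' [MOD m]) (ℓ : ℕ) :
    mkColoredCount m k ℓ = mkColoredCount m k' ℓ := by
  rw [mkColoredCount, mkColoredCount, h]

theorem one_add_Fmk (m k : ℕ) :
    1 + Fmk m k = PowerSeries.mk fun ℓ => (mkColoredCount m k ℓ : ℤ) := by
  ext (_ | n) <;> simp [Fmk, coeff_one, mkColoredCount_zero_right]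

theorem Fmk_succ (m k : ℕ) :
    Fmk m (k + 1) =
      X * PowerSeries.mk (fun p => if 1 % m = (k + 1) % m then (p : ℤ) + 1 else 1) *
        (1 + Fmk m k) := by
  ext (_ | n)
  · simp [Fmk]
  rw [mul_assoc, coeff_succ_X_mul, one_add_Fmk, coeff_mul, Nat.sum_antidiagonal_eq_sum_range_succ
    (fun p q => coeff p (PowerSeries.mk _) * coeff q (PowerSeries.mk _))]
  simp [Fmk, mkColoredCount_succ_succ]

theorem Fmk_of_modEq {m k k' : ℕ} (h : k ≡ k' [MOD m]) : Fmk m k = Fmk m k' := by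
  simp only [Fmk, mkColoredCount_of_modEq h]

theorem mk_one_sq :
    (PowerSeries.mk 1 : ℤ⟦X⟧) ^ 2 = PowerSeries.mk fun p => (p : ℤ) + 1 := by
  ext p
  simp [mk_one_pow_eq_mk_choose_add (S := ℤ) (d := 1), add_comm]

theorem one_sub_X_mul_Fmk_succ {m k : ℕ} (hk : 1 ≤ k) (hkm : k < m) :
    (1 - X) * Fmk m (k + 1) = X * (1 + Fmk m k) := by
  have hne : 1 % m ≠ (k + 1) % m := by
    rw [Nat.mod_eq_of_lt (by omega : 1 < m)]
    rcases (show k + 1 ≤ m by omega).eq_or_lt with h | h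
    · rw [h, Nat.mod_self]; omega
    · rw [Nat.mod_eq_of_lt h]; omega
  rw [Fmk_succ]
  simp only [if_neg hne]
  linear_combination (X * (1 + Fmk m k)) * mk_one_mul_one_sub_eq_one (S := ℤ)

theorem one_sub_X_sq_mul_Fmk_one (m : ℕ) : (1 - X) ^ 2 * Fmk m 1 = X * (1 + Fmk m m) := by
  rw [Fmk_succ, Fmk_of_modEq (show 0 ≡ m [MOD m] by simp [Nat.ModEq])]
  simp only [if_pos, ← mk_one_sq]
  linear_combination (X * (1 + Fmk m m) * (PowerSeries.mk 1 * (1 - X) + 1)) *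
    mk_one_mul_one_sub_eq_one (S := ℤ)

section Numerator

variable {R : Type*} [CommRing R] (x y : R) (m : ℕ)

/-- The right-hand side of the theorem in uniform shape: the term `x ^ i * y ^ (m - i)`,
`1 ≤ i ≤ m`, carries an extra factor `y` exactly when `i < k`. At `k = m + 1` this is `y` times
the value at `k = 1`, which is what closes the recurrence in `k` into a cycle. -/
def fmkNumerator (k : ℕ) : R :=
  ∑ i ∈ range m, x ^ (i + 1) * y ^ (m - (i + 1)) * if i + 1 < k then y else 1

theorem fmkNumerator_eq {k : ℕ} (hk : 1 ≤ k) (hkm : k ≤ m) :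
    fmkNumerator x y m k =
      x ^ m + ∑ j ∈ Icc 1 (k - 1), x ^ j * y ^ (m - j + 1) +
        ∑ t ∈ Icc k (m - 1), x ^ t * y ^ (m - t) := by
  obtain ⟨k, rfl⟩ : ∃ k', k = k' + 1 := ⟨k - 1, by omega⟩
  obtain ⟨m, rfl⟩ : ∃ m', m = m' + 1 := ⟨m - 1, by omega⟩
  set f : ℕ → R := fun i => x ^ i * y ^ (m + 1 - i) * if i < k + 1 then y else 1
  have hsum : fmkNumerator x y (m + 1) (k + 1) = ∑ i ∈ Ico 1 (m + 2), f i := by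
    rw [sum_Ico_eq_sum_range]
    simp [fmkNumerator, f, add_comm]
  have hlow : ∑ i ∈ Ico 1 (k + 1), f i = ∑ i ∈ Icc 1 k, x ^ i * y ^ (m + 1 - i + 1) := by
    rw [← Ico_add_one_right_eq_Icc]
    exact sum_congr rfl fun i hi => by
      simp only [f, if_pos (mem_Ico.1 hi).2, mul_assoc, ← pow_succ]
  have hhigh :
      ∑ i ∈ Ico (k + 1) (m + 1), f i = ∑ i ∈ Icc (k + 1) m, x ^ i * y ^ (m + 1 - i) := by
    rw [← Ico_add_one_right_eq_Icc]
    exact sum_congr rfl fun i hi => by simp only [f, if_neg (not_lt.2 (mem_Ico.1 hi).1), mul_one]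
  have htop : f (m + 1) = x ^ (m + 1) := by simp [f, show ¬ m < k by omega]
  rw [hsum, sum_Ico_succ_top (by omega), ← sum_Ico_consecutive f (show 1 ≤ k + 1 by omega) hkm,
    hlow, hhigh, htop, Nat.add_sub_cancel, Nat.add_sub_cancel]
  ring

theorem mul_fmkNumerator_succ {k : ℕ} (hk : 1 ≤ k) (hkm : k ≤ m) :
    y * fmkNumerator x y m (k + 1) = x * fmkNumerator x y m k + x * (y ^ (m + 1) - x ^ m) := by
  obtain ⟨m, rfl⟩ : ∃ m', m = m' + 1 := ⟨m - 1, by omega⟩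
  have hshift : ∀ i ∈ range m,
      y * (x ^ (i + 1 + 1) * y ^ (m + 1 - (i + 1 + 1)) * if i + 1 + 1 < k + 1 then y else 1) =
        x * (x ^ (i + 1) * y ^ (m + 1 - (i + 1)) * if i + 1 < k then y else 1) := by
    intro i hi
    rw [show m + 1 - (i + 1) = m + 1 - (i + 1 + 1) + 1 by simp at hi; omega]
    simp only [Nat.add_lt_add_iff_right]
    ring
  rw [fmkNumerator, fmkNumerator, mul_sum, mul_sum, sum_range_succ', sum_range_succ,
    sum_congr rfl hshift]
  simp [show 0 < k by omega, show ¬ m + 1 < k by omega]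
  ring

theorem fmkNumerator_succ_self : fmkNumerator x y m (m + 1) = y * fmkNumerator x y m 1 := by
  rw [fmkNumerator, fmkNumerator, mul_sum]
  refine sum_congr rfl fun i hi => ?_
  rw [if_pos (by simpa using hi), if_neg (by omega)]
  ring

end Numerator

theorem eq_zero_of_cyclic_recurrence {R : Type*} [CommRing R] [IsDomain R] {x y : R} {m : ℕ}
    (d : ℕ → R) (hy : y ≠ 0) (hU : y ^ (m + 1) - x ^ m ≠ 0)
    (hstep : ∀ k, 1 ≤ k → k < m → y * d (k + 1) = x * d k) (hwrap : y ^ 2 * d 1 = x * d m)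
    {k : ℕ} (hk : 1 ≤ k) (hkm : k ≤ m) : d k = 0 := by
  have hchain : ∀ j, j + 1 ≤ m → y ^ j * d (j + 1) = x ^ j * d 1 := by
    intro j hj
    induction j with
    | zero => simp
    | succ j ih =>
      calc y ^ (j + 1) * d (j + 1 + 1) = y ^ j * (y * d (j + 1 + 1)) := by ring
        _ = x * (y ^ j * d (j + 1)) := by rw [hstep (j + 1) (by omega) hj]; ring
        _ = x ^ (j + 1) * d 1 := by rw [ih (by omega)]; ring
  obtain ⟨m, rfl⟩ : ∃ m', m = m' + 1 := ⟨m - 1, by omega⟩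
  have hd1 : d 1 = 0 := by
    have hcycle : (y ^ (m + 1 + 1) - x ^ (m + 1)) * d 1 = 0 :=
      calc (y ^ (m + 1 + 1) - x ^ (m + 1)) * d 1
          = y ^ m * (y ^ 2 * d 1) - x ^ (m + 1) * d 1 := by ring
        _ = x * (y ^ m * d (m + 1)) - x ^ (m + 1) * d 1 := by rw [hwrap]; ring
        _ = 0 := by rw [hchain m le_rfl]; ring
    exact (mul_eq_zero.1 hcycle).resolve_left hU
  obtain ⟨j, rfl⟩ : ∃ j, k = j + 1 := ⟨k - 1, by omega⟩
  have := hchain j hkm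
  rw [hd1, mul_zero] at this
  exact (mul_eq_zero.1 this).resolve_left (pow_ne_zero _ hy)

theorem Fmk_generating_function_general (m k : ℕ) (hk1 : 1 ≤ k) (hk2 : k ≤ m) :
    ((1 - PowerSeries.X) ^ (m + 1) - PowerSeries.X ^ m) * Fmk m k =
      PowerSeries.X ^ m
        + ∑ j ∈ Finset.Icc 1 (k - 1),
            PowerSeries.X ^ j * (1 - PowerSeries.X) ^ (m - j + 1)
        + ∑ t ∈ Finset.Icc k (m - 1),
            PowerSeries.X ^ t * (1 - PowerSeries.X) ^ (m - t) := by
  have hm : 1 ≤ m := hk1.trans hk2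
  have hY : (1 - X : ℤ⟦X⟧) ≠ 0 := fun h => by simpa using congrArg constantCoeff h
  have hU : ((1 - X) ^ (m + 1) - X ^ m : ℤ⟦X⟧) ≠ 0 := fun h => by
    simpa [zero_pow (show m ≠ 0 by omega)] using congrArg constantCoeff h
  rw [← fmkNumerator_eq (X : ℤ⟦X⟧) (1 - X) m hk1 hk2, ← sub_eq_zero]
  refine eq_zero_of_cyclic_recurrence
    (fun j => ((1 - X) ^ (m + 1) - X ^ m) * Fmk m j - fmkNumerator X (1 - X) m j)
    hY hU ?_ ?_ hk1 hk2
  · intro j hj hjm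
    linear_combination ((1 - X) ^ (m + 1) - X ^ m) * one_sub_X_mul_Fmk_succ hj hjm -
      mul_fmkNumerator_succ (X : ℤ⟦X⟧) (1 - X) m hj hjm.le
  · linear_combination ((1 - X) ^ (m + 1) - X ^ m) * one_sub_X_sq_mul_Fmk_one m +
      (1 - X) * fmkNumerator_succ_self (X : ℤ⟦X⟧) (1 - X) m -
      mul_fmkNumerator_succ (X : ℤ⟦X⟧) (1 - X) m hm le_rfl

/-- For `m ≥ 2` and `1 ≤ k ≤ m`,
`((1-X)^{m+1} - X^m) · F_{m,k}(X)
  = X^m + ∑_{j=1}^{k-1} X^j (1-X)^{m-j+1} + ∑_{t=k}^{m-1} X^t (1-X)^{m-t}`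
in `ℤ[[X]]`. -/
theorem Fmk_generating_function (m k : ℕ) (hm : 2 ≤ m) (hk1 : 1 ≤ k) (hk2 : k ≤ m) :
    ((1 - PowerSeries.X) ^ (m + 1) - PowerSeries.X ^ m) * Fmk m k =
      PowerSeries.X ^ m
        + ∑ j ∈ Finset.Icc 1 (k - 1),
            PowerSeries.X ^ j * (1 - PowerSeries.X) ^ (m - j + 1)
        + ∑ t ∈ Finset.Icc k (m - 1),
            PowerSeries.X ^ t * (1 - PowerSeries.X) ^ (m - t) :=
  Fmk_generating_function_general m k hk1 hk2
end

section
/- Let a(ℓ) denote the number of n-color compositions of ℓ in which no part has color 2. Then a(1) = 1, a(2) = 2, a(3) = 5, and a(n) = 3·a(n−1) − 2·a(n−2) + a(n−3) for all n ≥ 4. -/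
open Finset

namespace Composition

def firstBlockEquiv (n : ℕ) : Composition (n + 1) ≃ Σ k : Fin (n + 1), Composition k where
  toFun c :=
    have hne : c.blocks ≠ [] := by simp [blocks_eq_nil]
    have hsum : c.blocks.head hne + c.blocks.tail.sum = n + 1 := by
      rw [← List.sum_cons, List.cons_head_tail hne, c.blocks_sum]
    have hpos : 0 < c.blocks.head hne := c.blocks_pos (List.head_mem hne)
    ⟨⟨c.blocks.tail.sum, by omega⟩,
      ⟨c.blocks.tail, fun hi => c.blocks_pos (List.mem_of_mem_tail hi), rfl⟩⟩
  invFun kd :=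
    ⟨(n + 1 - kd.1) :: kd.2.blocks,
      by rintro i (_ | ⟨_, hi⟩) <;> [omega; exact kd.2.blocks_pos hi],
      by rw [List.sum_cons, kd.2.blocks_sum]; omega⟩
  left_inv c := by
    have hne : c.blocks ≠ [] := by simp [blocks_eq_nil]
    ext1
    conv_rhs => rw [← List.cons_head_tail hne]
    have hsum := c.blocks_sum
    rw [← List.cons_head_tail hne, List.sum_cons] at hsum
    simp only [List.cons.injEq, and_true]
    omega
  right_inv := by
    rintro ⟨⟨k, hk⟩, ⟨blocks, _, hsum⟩⟩
    obtain rfl : blocks.sum = k := hsum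
    rfl

variable {R : Type*} [CommSemiring R] (f : ℕ → R)

def weightedCount (n : ℕ) : R := ∑ c : Composition n, (c.blocks.map f).prod

theorem weightedCount_zero : weightedCount f 0 = 1 := by
  have hc (c : Composition 0) : c.blocks = [] := (blocks_eq_nil c).2 rfl
  simp [weightedCount, hc, composition_card]

theorem weightedCount_succ (n : ℕ) :
    weightedCount f (n + 1) = ∑ k ∈ range (n + 1), f (n + 1 - k) * weightedCount f k := by
  rw [weightedCount, ← (firstBlockEquiv n).symm.sum_comp, Fintype.sum_sigma,
    ← Fin.sum_univ_eq_sum_range (fun k => f (n + 1 - k) * weightedCount f k)]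
  simp [firstBlockEquiv, weightedCount, mul_sum]

end Composition

open Composition

theorem sum_range_succ_mul_sub (a : ℕ → ℕ) (n : ℕ) :
    ∑ k ∈ range (n + 1), (n + 1 - k) * a k =
      ∑ k ∈ range n, (n - k) * a k + ∑ k ∈ range (n + 1), a k := by
  rw [sum_range_succ, sum_range_succ _ n, Nat.add_sub_cancel_left, one_mul, ← add_assoc,
    ← sum_add_distrib]
  congr 1
  refine sum_congr rfl fun k hk => ?_
  rw [Nat.sub_add_comm (mem_range.1 hk).le, add_one_mul]

theorem add_two_mul_eq_of_succ_eq_add_sum (a : ℕ → ℕ)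
    (ha : ∀ n, a (n + 1) = a n + ∑ k ∈ range n, (n - k) * a k) (n : ℕ) :
    a (n + 3) + 2 * a (n + 1) = 3 * a (n + 2) + a n := by
  have hT₁ := sum_range_succ_mul_sub a n
  have hT₂ : ∑ k ∈ range (n + 2), (n + 2 - k) * a k =
      ∑ k ∈ range (n + 1), (n + 1 - k) * a k + (∑ k ∈ range (n + 1), a k + a (n + 1)) := by
    rw [← sum_range_succ]
    exact sum_range_succ_mul_sub a (n + 1)
  have ha₁ : a (n + 1) = _ := ha n
  have ha₂ : a (n + 2) = _ := ha (n + 1)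
  have ha₃ : a (n + 3) = _ := ha (n + 2)
  omega

theorem noColor2Count_succ (n : ℕ) :
    noColor2Count (n + 1) = noColor2Count n + ∑ k ∈ range n, (n - k) * noColor2Count k := by
  rw [noColor2Count, ← weightedCount, weightedCount_succ, sum_range_succ, add_comm]
  simp only [Nat.add_sub_cancel_left, if_pos, one_mul]
  congr 1
  refine sum_congr rfl fun k hk => ?_
  have hk : k < n := mem_range.1 hk
  rw [if_neg (by omega), Nat.sub_right_comm, Nat.add_sub_cancel]
  rfl

/-- `a(1) = 1`, `a(2) = 2`, `a(3) = 5`, and `a(n) = 3a(n-1) - 2a(n-2) + a(n-3)`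
for all `n ≥ 4` (stated in `ℤ` so that subtraction is honest). -/
theorem noColor2Count_recurrence :
    noColor2Count 1 = 1 ∧ noColor2Count 2 = 2 ∧ noColor2Count 3 = 5 ∧
    ∀ n : ℕ, 4 ≤ n →
      (noColor2Count n : ℤ) =
        3 * noColor2Count (n - 1) - 2 * noColor2Count (n - 2) + noColor2Count (n - 3) := by
  have h₀ : noColor2Count 0 = 1 := weightedCount_zero _
  refine ⟨by simp [noColor2Count_succ, h₀], by simp [noColor2Count_succ, h₀],
    by simp [noColor2Count_succ, sum_range_succ, h₀], fun n hn => ?_⟩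
  obtain ⟨m, rfl⟩ := Nat.exists_eq_add_of_le' hn
  have key : noColor2Count (m + 4) + 2 * noColor2Count (m + 2) =
      3 * noColor2Count (m + 3) + noColor2Count (m + 1) :=
    add_two_mul_eq_of_succ_eq_add_sum _ noColor2Count_succ (m + 1)
  simp only [Nat.reduceSubDiff]
  omega
end
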